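/- arXiv:math/0701652 — 10 statements merged into one kernel-verified Lean document; each statement's English description precedes it below -/
import Mathlib

section
/- Let (C,Δ,ε) be a comonoid in M and let P be an object of M. The following are equivalent: (i) there exists a morphism λ : P⊗C → C⊗(P⊗C) making P⊗C a C-bicomodule whose right C-coaction is P⊗Δ, i.e. λ satisfies (ε⊗id_{P⊗C})∘λ = id_{P⊗C}, (C⊗λ)∘λ = (Δ⊗(P⊗C))∘λ, and (C⊗(P⊗Δ))∘λ = (λ⊗C)∘(P⊗Δ); (ii) there exists a morphism 𝔭 : P⊗C → C⊗P satisfying (Δ⊗P)∘𝔭 = (C⊗𝔭)∘(𝔭⊗C)∘(P⊗Δ) and (ε⊗P)∘𝔭 = P⊗ε. -/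
/-!
A left coaction `λ` on `P ⊗ C` yields `𝔭 = λ ≫ C ◁ (P ◁ ε)`, and an entwining `𝔭` yields
`λ = P ◁ Δ ≫ 𝔭 ▷ C`. The key point is that compatibility of `λ` with the right coaction
`P ◁ Δ`, followed by the counit law, recovers `λ` from its `𝔭`; coassociativity of `λ` then
becomes comultiplicativity of `𝔭`. Conversely, the bicomodule axioms of `P ◁ Δ ≫ 𝔭 ▷ C`
reduce to the comonoid laws of `Δ` and the two axioms of `𝔭`.
-/

open CategoryTheory MonoidalCategory

namespace CategoryTheory.MonoidalCategory

variable {M : Type*} [Category M] [MonoidalCategory M] {C P : M}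

section Constructions

variable (Δ : C ⟶ C ⊗ C) (ε : C ⟶ 𝟙_ M)

def entwiningOfLeftCoaction (lam : P ⊗ C ⟶ C ⊗ (P ⊗ C)) : P ⊗ C ⟶ C ⊗ P :=
  lam ≫ (C ◁ ((P ◁ ε) ≫ (ρ_ P).hom))

def leftCoactionOfEntwining (p : P ⊗ C ⟶ C ⊗ P) : P ⊗ C ⟶ C ⊗ (P ⊗ C) :=
  (P ◁ Δ) ≫ (α_ P C C).inv ≫ (p ▷ C) ≫ (α_ C P C).hom

end Constructions

variable {Δ : C ⟶ C ⊗ C} {ε : C ⟶ 𝟙_ M}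

section FromLeftCoaction

variable {lam : P ⊗ C ⟶ C ⊗ (P ⊗ C)}

theorem entwiningOfLeftCoaction_counit (h_counit : lam ≫ (ε ▷ (P ⊗ C)) = (λ_ (P ⊗ C)).inv) :
    entwiningOfLeftCoaction ε lam ≫ (ε ▷ P) ≫ (λ_ P).hom = (P ◁ ε) ≫ (ρ_ P).hom := by
  rw [entwiningOfLeftCoaction, Category.assoc, whisker_exchange_assoc, reassoc_of% h_counit]
  simp only [MonoidalCategory.whiskerLeft_comp, Category.assoc]
  monoidal

theorem leftCoactionOfEntwining_entwiningOfLeftCoaction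
    (hcounit_l : Δ ≫ (ε ▷ C) = (λ_ C).inv)
    (h_comm : lam ≫ (C ◁ (P ◁ Δ)) =
      (P ◁ Δ) ≫ (α_ P C C).inv ≫ (lam ▷ C) ≫ (α_ C (P ⊗ C) C).hom ≫ (C ◁ (α_ P C C).hom)) :
    leftCoactionOfEntwining Δ (entwiningOfLeftCoaction ε lam) = lam := by
  calc leftCoactionOfEntwining Δ (entwiningOfLeftCoaction ε lam)
      _ = (lam ≫ (C ◁ (P ◁ Δ))) ≫ (C ◁ (P ◁ (ε ▷ C))) ≫ (C ◁ (P ◁ (λ_ C).hom)) := by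
        rw [h_comm, leftCoactionOfEntwining, entwiningOfLeftCoaction]
        simp only [comp_whiskerRight, MonoidalCategory.whiskerLeft_comp, Category.assoc]
        monoidal
      _ = lam ≫ (C ◁ (P ◁ (Δ ≫ (ε ▷ C) ≫ (λ_ C).hom))) := by simp
      _ = lam := by rw [reassoc_of% hcounit_l]; simp

theorem entwiningOfLeftCoaction_comul
    (h_coassoc : lam ≫ (C ◁ lam) = lam ≫ (Δ ▷ (P ⊗ C)) ≫ (α_ C C (P ⊗ C)).hom)
    (h_recover : leftCoactionOfEntwining Δ (entwiningOfLeftCoaction ε lam) = lam) :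
    entwiningOfLeftCoaction ε lam ≫ (Δ ▷ P) =
      (P ◁ Δ) ≫ (α_ P C C).inv ≫ (entwiningOfLeftCoaction ε lam ▷ C) ≫ (α_ C P C).hom ≫
        (C ◁ entwiningOfLeftCoaction ε lam) ≫ (α_ C C P).inv := by
  have h_coassoc' : lam ≫ (Δ ▷ (P ⊗ C)) = lam ≫ (C ◁ lam) ≫ (α_ C C (P ⊗ C)).inv := by
    rw [← cancel_mono (α_ C C (P ⊗ C)).hom]; simp [h_coassoc]
  conv_lhs =>
    rw [entwiningOfLeftCoaction, Category.assoc, whisker_exchange, reassoc_of% h_coassoc',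
      ← associator_inv_naturality_right, ← MonoidalCategory.whiskerLeft_comp_assoc,
      ← entwiningOfLeftCoaction]
  nth_rw 1 [← h_recover]
  simp only [leftCoactionOfEntwining, Category.assoc]

end FromLeftCoaction

section FromEntwining

variable {p : P ⊗ C ⟶ C ⊗ P}

theorem leftCoactionOfEntwining_counit (hcounit_l : Δ ≫ (ε ▷ C) = (λ_ C).inv)
    (hp_counit : p ≫ (ε ▷ P) ≫ (λ_ P).hom = (P ◁ ε) ≫ (ρ_ P).hom) :
    leftCoactionOfEntwining Δ p ≫ (ε ▷ (P ⊗ C)) = (λ_ (P ⊗ C)).inv := by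
  have hp_counit' : p ≫ (ε ▷ P) = (P ◁ ε) ≫ (ρ_ P).hom ≫ (λ_ P).inv := by
    rw [← cancel_mono (λ_ P).hom]; simp [hp_counit]
  simp only [leftCoactionOfEntwining, Category.assoc]
  rw [← associator_naturality_left, ← comp_whiskerRight_assoc, hp_counit']
  simp only [comp_whiskerRight, Category.assoc]
  rw [← associator_inv_naturality_middle_assoc, ← MonoidalCategory.whiskerLeft_comp_assoc,
    hcounit_l]
  monoidal

theorem leftCoactionOfEntwining_coassoc (hcoassoc : Δ ≫ (Δ ▷ C) ≫ (α_ C C C).hom = Δ ≫ (C ◁ Δ))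
    (hp_comul : p ≫ (Δ ▷ P) =
      (P ◁ Δ) ≫ (α_ P C C).inv ≫ (p ▷ C) ≫ (α_ C P C).hom ≫ (C ◁ p) ≫ (α_ C C P).inv) :
    leftCoactionOfEntwining Δ p ≫ (C ◁ leftCoactionOfEntwining Δ p) =
      leftCoactionOfEntwining Δ p ≫ (Δ ▷ (P ⊗ C)) ≫ (α_ C C (P ⊗ C)).hom := by
  simp only [leftCoactionOfEntwining]
  conv_rhs =>
    simp only [Category.assoc]
    rw [← associator_naturality_left_assoc, ← comp_whiskerRight_assoc, hp_comul]
  conv_lhs =>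
    simp only [MonoidalCategory.whiskerLeft_comp, Category.assoc]
    rw [← associator_naturality_right_assoc, ← whisker_exchange_assoc,
      ← associator_inv_naturality_right_assoc, ← MonoidalCategory.whiskerLeft_comp_assoc,
      ← hcoassoc]
  simp only [MonoidalCategory.whiskerLeft_comp, Category.assoc, comp_whiskerRight]
  monoidal

theorem leftCoactionOfEntwining_comm_rightCoaction
    (hcoassoc : Δ ≫ (Δ ▷ C) ≫ (α_ C C C).hom = Δ ≫ (C ◁ Δ)) :
    leftCoactionOfEntwining Δ p ≫ (C ◁ (P ◁ Δ)) =
      (P ◁ Δ) ≫ (α_ P C C).inv ≫ (leftCoactionOfEntwining Δ p ▷ C) ≫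
        (α_ C (P ⊗ C) C).hom ≫ (C ◁ (α_ P C C).hom) := by
  simp only [leftCoactionOfEntwining, Category.assoc]
  rw [← associator_naturality_right, ← whisker_exchange_assoc,
    ← associator_inv_naturality_right_assoc, ← MonoidalCategory.whiskerLeft_comp_assoc,
    ← hcoassoc]
  simp only [MonoidalCategory.whiskerLeft_comp, Category.assoc, comp_whiskerRight]
  monoidal

end FromEntwining

end CategoryTheory.MonoidalCategory

theorem stmt_1_general {M : Type*} [Category M] [MonoidalCategory M]
    (C P : M) (Δ : C ⟶ C ⊗ C) (ε : C ⟶ 𝟙_ M)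
    (hcounit_l : Δ ≫ (ε ▷ C) = (λ_ C).inv)
    (hcoassoc : Δ ≫ (Δ ▷ C) ≫ (α_ C C C).hom = Δ ≫ (C ◁ Δ)) :
    (∃ lam : P ⊗ C ⟶ C ⊗ (P ⊗ C),
        lam ≫ (ε ▷ (P ⊗ C)) = (λ_ (P ⊗ C)).inv ∧
        lam ≫ (C ◁ lam) = lam ≫ (Δ ▷ (P ⊗ C)) ≫ (α_ C C (P ⊗ C)).hom ∧
        lam ≫ (C ◁ (P ◁ Δ)) =
          (P ◁ Δ) ≫ (α_ P C C).inv ≫ (lam ▷ C) ≫ (α_ C (P ⊗ C) C).hom ≫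
            (C ◁ (α_ P C C).hom)) ↔
    (∃ p : P ⊗ C ⟶ C ⊗ P,
        p ≫ (Δ ▷ P) =
          (P ◁ Δ) ≫ (α_ P C C).inv ≫ (p ▷ C) ≫ (α_ C P C).hom ≫
            (C ◁ p) ≫ (α_ C C P).inv ∧
        p ≫ (ε ▷ P) ≫ (λ_ P).hom = (P ◁ ε) ≫ (ρ_ P).hom) := by
  constructor
  · rintro ⟨lam, h_counit, h_coassoc, h_comm⟩
    exact ⟨entwiningOfLeftCoaction ε lam,
      entwiningOfLeftCoaction_comul h_coassoc
        (leftCoactionOfEntwining_entwiningOfLeftCoaction hcounit_l h_comm),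
      entwiningOfLeftCoaction_counit h_counit⟩
  · rintro ⟨p, hp_comul, hp_counit⟩
    exact ⟨leftCoactionOfEntwining Δ p, leftCoactionOfEntwining_counit hcounit_l hp_counit,
      leftCoactionOfEntwining_coassoc hcoassoc hp_comul,
      leftCoactionOfEntwining_comm_rightCoaction hcoassoc⟩

/-- Lemma 1.4: for a comonoid `(C, Δ, ε)` and an object `P`, the existence of a
`C`-bicomodule structure on `P ⊗ C` whose right coaction is `P ◁ Δ` is equivalent to the
existence of an entwining `P ⊗ C ⟶ C ⊗ P`. -/
theorem stmt_1 {M : Type*} [Category M] [MonoidalCategory M]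
    (C P : M) (Δ : C ⟶ C ⊗ C) (ε : C ⟶ 𝟙_ M)
    (hcounit_l : Δ ≫ (ε ▷ C) = (λ_ C).inv)
    (hcounit_r : Δ ≫ (C ◁ ε) = (ρ_ C).inv)
    (hcoassoc : Δ ≫ (Δ ▷ C) ≫ (α_ C C C).hom = Δ ≫ (C ◁ Δ)) :
    (∃ lam : P ⊗ C ⟶ C ⊗ (P ⊗ C),
        lam ≫ (ε ▷ (P ⊗ C)) = (λ_ (P ⊗ C)).inv ∧
        lam ≫ (C ◁ lam) = lam ≫ (Δ ▷ (P ⊗ C)) ≫ (α_ C C (P ⊗ C)).hom ∧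
        lam ≫ (C ◁ (P ◁ Δ)) =
          (P ◁ Δ) ≫ (α_ P C C).inv ≫ (lam ▷ C) ≫ (α_ C (P ⊗ C) C).hom ≫
            (C ◁ (α_ P C C).hom)) ↔
    (∃ p : P ⊗ C ⟶ C ⊗ P,
        p ≫ (Δ ▷ P) =
          (P ◁ Δ) ≫ (α_ P C C).inv ≫ (p ▷ C) ≫ (α_ C P C).hom ≫
            (C ◁ p) ≫ (α_ C C P).inv ∧
        p ≫ (ε ▷ P) ≫ (λ_ P).hom = (P ◁ ε) ≫ (ρ_ P).hom) :=
  stmt_1_general C P Δ ε hcounit_l hcoassoc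
end

section
/- Let (A,μ,η) be a monoid in M and let U be an object of M. The following are equivalent: (i) there exists a morphism l : A⊗(U⊗A) → U⊗A making U⊗A an A-bimodule whose right A-action is U⊗μ, i.e. l satisfies l∘(η⊗(U⊗A)) = id_{U⊗A}, l∘(μ⊗(U⊗A)) = l∘(A⊗l), and (U⊗μ)∘(l⊗A) = l∘(A⊗(U⊗μ)); (ii) there exists a morphism 𝔲 : A⊗U → U⊗A satisfying 𝔲∘(μ⊗U) = (U⊗μ)∘(𝔲⊗A)∘(A⊗𝔲) and 𝔲∘(η⊗U) = U⊗η. (The passage (ii)⇒(i) is given by l = (U⊗μ)∘(𝔲⊗A), and (i)⇒(ii) by 𝔲 = l∘(A⊗U⊗η).) -/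
/-!
A left action `l` on `U ⊗ A` commuting with the right action `U ◁ μ` is determined by its
restriction `u` along the unit `U ⟶ U ⊗ A`: right linearity and the left unit law of the monoid
give back `l = (u ▷ A) ≫ (U ◁ μ)`. Under this correspondence the unit and associativity laws of
`l` become the two entwining axioms of `u`, while for an `l` built from `u` the compatibility
with the right action is just associativity of `μ`.
-/

open CategoryTheory MonoidalCategory

section Entwining

variable {M : Type*} [Category M] [MonoidalCategory M] {A U : M}
  (μ : A ⊗ A ⟶ A) (η : 𝟙_ M ⟶ A)

def actionOfEntwining (u : A ⊗ U ⟶ U ⊗ A) : A ⊗ (U ⊗ A) ⟶ U ⊗ A :=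
  (α_ A U A).inv ≫ (u ▷ A) ≫ (α_ U A A).hom ≫ (U ◁ μ)

def entwiningOfAction (l : A ⊗ (U ⊗ A) ⟶ U ⊗ A) : A ⊗ U ⟶ U ⊗ A :=
  (A ◁ ((ρ_ U).inv ≫ (U ◁ η))) ≫ l

variable {μ η}

lemma actionOfEntwining_one (hunit_l : (η ▷ A) ≫ μ = (λ_ A).hom) {u : A ⊗ U ⟶ U ⊗ A}
    (hu : (η ▷ U) ≫ u = (λ_ U).hom ≫ (ρ_ U).inv ≫ (U ◁ η)) :
    (η ▷ (U ⊗ A)) ≫ actionOfEntwining μ u = (λ_ (U ⊗ A)).hom :=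
  calc (η ▷ (U ⊗ A)) ≫ actionOfEntwining μ u
      = 𝟙 _ ⊗≫ ((((η ▷ U) ≫ u) ▷ A) ≫ (α_ U A A).hom ≫ (U ◁ μ)) := by
        unfold actionOfEntwining; monoidal
    _ = (λ_ (U ⊗ A)).hom ≫ ((ρ_ U).inv ▷ A) ≫ (α_ U (𝟙_ M) A).hom ≫ (U ◁ ((η ▷ A) ≫ μ)) := by
        rw [hu]; monoidal
    _ = (λ_ (U ⊗ A)).hom := by rw [hunit_l]; monoidal

lemma actionOfEntwining_middle_assoc (hassoc : (μ ▷ A) ≫ μ = (α_ A A A).hom ≫ (A ◁ μ) ≫ μ)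
    (u : A ⊗ U ⟶ U ⊗ A) :
    (actionOfEntwining μ u ▷ A) ≫ (α_ U A A).hom ≫ (U ◁ μ) =
      (α_ A (U ⊗ A) A).hom ≫ (A ◁ (α_ U A A).hom) ≫ (A ◁ (U ◁ μ)) ≫ actionOfEntwining μ u :=
  calc (actionOfEntwining μ u ▷ A) ≫ (α_ U A A).hom ≫ (U ◁ μ)
      = 𝟙 _ ⊗≫ ((u ▷ A) ▷ A) ⊗≫ (U ◁ ((μ ▷ A) ≫ μ)) := by
        unfold actionOfEntwining; monoidal
    _ = 𝟙 _ ⊗≫ ((u ▷ (A ⊗ A)) ≫ ((U ⊗ A) ◁ μ)) ⊗≫ (U ◁ μ) := by rw [hassoc]; monoidal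
    _ = 𝟙 _ ⊗≫ (((A ⊗ U) ◁ μ) ≫ (u ▷ A)) ⊗≫ (U ◁ μ) := by rw [← whisker_exchange]
    _ = (α_ A (U ⊗ A) A).hom ≫ (A ◁ (α_ U A A).hom) ≫ (A ◁ (U ◁ μ)) ≫
          actionOfEntwining μ u := by
        unfold actionOfEntwining; monoidal

lemma actionOfEntwining_assoc (hassoc : (μ ▷ A) ≫ μ = (α_ A A A).hom ≫ (A ◁ μ) ≫ μ)
    {u : A ⊗ U ⟶ U ⊗ A}
    (hu : (μ ▷ U) ≫ u =
      (α_ A A U).hom ≫ (A ◁ u) ≫ (α_ A U A).inv ≫ (u ▷ A) ≫ (α_ U A A).hom ≫ (U ◁ μ)) :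
    (μ ▷ (U ⊗ A)) ≫ actionOfEntwining μ u =
      (α_ A A (U ⊗ A)).hom ≫ (A ◁ actionOfEntwining μ u) ≫ actionOfEntwining μ u :=
  calc (μ ▷ (U ⊗ A)) ≫ actionOfEntwining μ u
      = 𝟙 _ ⊗≫ ((((μ ▷ U) ≫ u) ▷ A) ≫ (α_ U A A).hom ≫ (U ◁ μ)) := by
        unfold actionOfEntwining; monoidal
    _ = 𝟙 _ ⊗≫ ((A ◁ u) ▷ A) ⊗≫ (u ▷ (A ⊗ A)) ⊗≫ (U ◁ ((μ ▷ A) ≫ μ)) := by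
        rw [hu]; monoidal
    _ = 𝟙 _ ⊗≫ ((A ◁ u) ▷ A) ⊗≫ ((u ▷ (A ⊗ A)) ≫ ((U ⊗ A) ◁ μ)) ⊗≫ (U ◁ μ) := by
        rw [hassoc]; monoidal
    _ = 𝟙 _ ⊗≫ ((A ◁ u) ▷ A) ⊗≫ (((A ⊗ U) ◁ μ) ≫ (u ▷ A)) ⊗≫ (U ◁ μ) := by
        rw [← whisker_exchange]
    _ = (α_ A A (U ⊗ A)).hom ≫ (A ◁ actionOfEntwining μ u) ≫ actionOfEntwining μ u := by
        unfold actionOfEntwining; monoidal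

lemma actionOfEntwining_entwiningOfAction (hunit_l : (η ▷ A) ≫ μ = (λ_ A).hom)
    {l : A ⊗ (U ⊗ A) ⟶ U ⊗ A}
    (hl : (l ▷ A) ≫ (α_ U A A).hom ≫ (U ◁ μ) =
      (α_ A (U ⊗ A) A).hom ≫ (A ◁ (α_ U A A).hom) ≫ (A ◁ (U ◁ μ)) ≫ l) :
    actionOfEntwining μ (entwiningOfAction η l) = l :=
  calc actionOfEntwining μ (entwiningOfAction η l)
      = (α_ A U A).inv ≫ ((A ◁ ((ρ_ U).inv ≫ (U ◁ η))) ▷ A) ≫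
          (l ▷ A) ≫ (α_ U A A).hom ≫ (U ◁ μ) := by
        simp [actionOfEntwining, entwiningOfAction]
    _ = 𝟙 _ ⊗≫ (A ◁ (U ◁ ((η ▷ A) ≫ μ))) ⊗≫ l := by rw [hl]; monoidal
    _ = l := by rw [hunit_l]; monoidal

lemma entwiningOfAction_one {l : A ⊗ (U ⊗ A) ⟶ U ⊗ A}
    (hl : (η ▷ (U ⊗ A)) ≫ l = (λ_ (U ⊗ A)).hom) :
    (η ▷ U) ≫ entwiningOfAction η l = (λ_ U).hom ≫ (ρ_ U).inv ≫ (U ◁ η) :=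
  calc (η ▷ U) ≫ entwiningOfAction η l
      = (𝟙_ M ◁ ((ρ_ U).inv ≫ (U ◁ η))) ≫ (η ▷ (U ⊗ A)) ≫ l := by
        rw [entwiningOfAction, whisker_exchange_assoc]
    _ = (λ_ U).hom ≫ (ρ_ U).inv ≫ (U ◁ η) := by rw [hl]; monoidal

lemma entwiningOfAction_mul (hunit_l : (η ▷ A) ≫ μ = (λ_ A).hom) {l : A ⊗ (U ⊗ A) ⟶ U ⊗ A}
    (hl_assoc : (μ ▷ (U ⊗ A)) ≫ l = (α_ A A (U ⊗ A)).hom ≫ (A ◁ l) ≫ l)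
    (hl_middle : (l ▷ A) ≫ (α_ U A A).hom ≫ (U ◁ μ) =
      (α_ A (U ⊗ A) A).hom ≫ (A ◁ (α_ U A A).hom) ≫ (A ◁ (U ◁ μ)) ≫ l) :
    (μ ▷ U) ≫ entwiningOfAction η l =
      (α_ A A U).hom ≫ (A ◁ entwiningOfAction η l) ≫ (α_ A U A).inv ≫
        (entwiningOfAction η l ▷ A) ≫ (α_ U A A).hom ≫ (U ◁ μ) :=
  calc (μ ▷ U) ≫ entwiningOfAction η l
      = ((A ⊗ A) ◁ ((ρ_ U).inv ≫ (U ◁ η))) ≫ (μ ▷ (U ⊗ A)) ≫ l := by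
        rw [entwiningOfAction, whisker_exchange_assoc]
    _ = (α_ A A U).hom ≫ (A ◁ entwiningOfAction η l) ≫ l := by
        rw [hl_assoc, entwiningOfAction]; monoidal
    _ = (α_ A A U).hom ≫ (A ◁ entwiningOfAction η l) ≫
          actionOfEntwining μ (entwiningOfAction η l) := by
        rw [actionOfEntwining_entwiningOfAction hunit_l hl_middle]

end Entwining

theorem stmt_2_general {M : Type*} [Category M] [MonoidalCategory M]
    (A U : M) (μ : A ⊗ A ⟶ A) (η : 𝟙_ M ⟶ A)
    (hassoc : (μ ▷ A) ≫ μ = (α_ A A A).hom ≫ (A ◁ μ) ≫ μ)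
    (hunit_l : (η ▷ A) ≫ μ = (λ_ A).hom) :
    (∃ l : A ⊗ (U ⊗ A) ⟶ U ⊗ A,
        (η ▷ (U ⊗ A)) ≫ l = (λ_ (U ⊗ A)).hom ∧
        (μ ▷ (U ⊗ A)) ≫ l = (α_ A A (U ⊗ A)).hom ≫ (A ◁ l) ≫ l ∧
        (l ▷ A) ≫ (α_ U A A).hom ≫ (U ◁ μ) =
          (α_ A (U ⊗ A) A).hom ≫ (A ◁ (α_ U A A).hom) ≫ (A ◁ (U ◁ μ)) ≫ l) ↔
    (∃ u : A ⊗ U ⟶ U ⊗ A,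
        (μ ▷ U) ≫ u =
          (α_ A A U).hom ≫ (A ◁ u) ≫ (α_ A U A).inv ≫ (u ▷ A) ≫
            (α_ U A A).hom ≫ (U ◁ μ) ∧
        (η ▷ U) ≫ u = (λ_ U).hom ≫ (ρ_ U).inv ≫ (U ◁ η)) := by
  constructor
  · rintro ⟨l, hl_one, hl_assoc, hl_middle⟩
    exact ⟨entwiningOfAction η l, entwiningOfAction_mul hunit_l hl_assoc hl_middle,
      entwiningOfAction_one hl_one⟩
  · rintro ⟨u, hu_mul, hu_one⟩
    exact ⟨actionOfEntwining μ u, actionOfEntwining_one hunit_l hu_one,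
      actionOfEntwining_assoc hassoc hu_mul, actionOfEntwining_middle_assoc hassoc u⟩

/-- Lemma 1.9: for a monoid `(A, μ, η)` and an object `U`, the existence of an
`A`-bimodule structure on `U ⊗ A` whose right action is `U ◁ μ` is equivalent to the
existence of an entwining `A ⊗ U ⟶ U ⊗ A`. -/
theorem stmt_2 {M : Type*} [Category M] [MonoidalCategory M]
    (A U : M) (μ : A ⊗ A ⟶ A) (η : 𝟙_ M ⟶ A)
    (hassoc : (μ ▷ A) ≫ μ = (α_ A A A).hom ≫ (A ◁ μ) ≫ μ)
    (hunit_l : (η ▷ A) ≫ μ = (λ_ A).hom)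
    (hunit_r : (A ◁ η) ≫ μ = (ρ_ A).hom) :
    (∃ l : A ⊗ (U ⊗ A) ⟶ U ⊗ A,
        (η ▷ (U ⊗ A)) ≫ l = (λ_ (U ⊗ A)).hom ∧
        (μ ▷ (U ⊗ A)) ≫ l = (α_ A A (U ⊗ A)).hom ≫ (A ◁ l) ≫ l ∧
        (l ▷ A) ≫ (α_ U A A).hom ≫ (U ◁ μ) =
          (α_ A (U ⊗ A) A).hom ≫ (A ◁ (α_ U A A).hom) ≫ (A ◁ (U ◁ μ)) ≫ l) ↔
    (∃ u : A ⊗ U ⟶ U ⊗ A,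
        (μ ▷ U) ≫ u =
          (α_ A A U).hom ≫ (A ◁ u) ≫ (α_ A U A).inv ≫ (u ▷ A) ≫
            (α_ U A A).hom ≫ (U ◁ μ) ∧
        (η ▷ U) ≫ u = (λ_ U).hom ≫ (ρ_ U).inv ≫ (U ◁ η)) :=
  stmt_2_general A U μ η hassoc hunit_l
end

section
/- Let (A,μ,η) be a monoid in M and let N be an object of M. The following are equivalent: (i) there exists a morphism r : (A⊗N)⊗A → A⊗N making A⊗N an A-bimodule whose left A-action is μ⊗N, i.e. r satisfies r∘((A⊗N)⊗η) = id_{A⊗N}, r∘((A⊗N)⊗μ) = r∘(r⊗A), and r∘((μ⊗N)⊗A) = (μ⊗N)∘(A⊗r); (ii) there exists a morphism 𝔪 : N⊗A → A⊗N satisfying 𝔪∘(N⊗μ) = (μ⊗N)∘(A⊗𝔪)∘(𝔪⊗A) and 𝔪∘(N⊗η) = η⊗N. -/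
/-!
A right action `r` on `A ⊗ N` compatible with the left action `μ ▷ N` is determined by its
restriction `m := r ∘ ((η ⊗ N) ⊗ A) : N ⊗ A ⟶ A ⊗ N`, via `r = (μ ⊗ N) ∘ (A ⊗ m)`: this is
compatibility followed by the right unit law of `A`. Conversely every `m` defines such an `r`,
compatible with `μ ▷ N` by associativity of `μ`. Under this correspondence the unit and
associativity laws of `r` are exactly the two entwining laws of `m`.
-/

open CategoryTheory MonoidalCategory

namespace CategoryTheory.MonoidalCategory

variable {M : Type*} [Category M] [MonoidalCategory M] {A N : M}

def rightActionOfEntwining (μ : A ⊗ A ⟶ A) (m : N ⊗ A ⟶ A ⊗ N) : (A ⊗ N) ⊗ A ⟶ A ⊗ N :=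
  (α_ A N A).hom ≫ (A ◁ m) ≫ (α_ A A N).inv ≫ (μ ▷ N)

def entwiningOfRightAction (η : 𝟙_ M ⟶ A) (r : (A ⊗ N) ⊗ A ⟶ A ⊗ N) : N ⊗ A ⟶ A ⊗ N :=
  (((λ_ N).inv ≫ (η ▷ N)) ▷ A) ≫ r

variable (μ : A ⊗ A ⟶ A) (η : 𝟙_ M ⟶ A)

theorem whiskerRight_rightActionOfEntwining
    (hassoc : (μ ▷ A) ≫ μ = (α_ A A A).hom ≫ (A ◁ μ) ≫ μ) (m : N ⊗ A ⟶ A ⊗ N) :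
    ((μ ▷ N) ▷ A) ≫ rightActionOfEntwining μ m =
      ((α_ A A N).hom ▷ A) ≫ (α_ A (A ⊗ N) A).hom ≫ (A ◁ rightActionOfEntwining μ m) ≫
        (α_ A A N).inv ≫ (μ ▷ N) := by
  unfold rightActionOfEntwining
  calc ((μ ▷ N) ▷ A) ≫ (α_ A N A).hom ≫ (A ◁ m) ≫ (α_ A A N).inv ≫ (μ ▷ N)
      = (α_ (A ⊗ A) N A).hom ≫ ((μ ▷ (N ⊗ A)) ≫ (A ◁ m)) ≫ (α_ A A N).inv ≫
          (μ ▷ N) := by monoidal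
    _ = (α_ (A ⊗ A) N A).hom ≫ (((A ⊗ A) ◁ m) ≫ (μ ▷ (A ⊗ N))) ≫ (α_ A A N).inv ≫
          (μ ▷ N) := by rw [whisker_exchange]
    _ = (α_ (A ⊗ A) N A).hom ≫ ((A ⊗ A) ◁ m) ≫ (α_ (A ⊗ A) A N).inv ≫
          (((μ ▷ A) ≫ μ) ▷ N) := by monoidal
    _ = (α_ (A ⊗ A) N A).hom ≫ ((A ⊗ A) ◁ m) ≫ (α_ (A ⊗ A) A N).inv ≫
          (((α_ A A A).hom ≫ (A ◁ μ) ≫ μ) ▷ N) := by rw [hassoc]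
    _ = ((α_ A A N).hom ▷ A) ≫ (α_ A (A ⊗ N) A).hom ≫
          (A ◁ ((α_ A N A).hom ≫ (A ◁ m) ≫ (α_ A A N).inv ≫ (μ ▷ N))) ≫
          (α_ A A N).inv ≫ (μ ▷ N) := by monoidal

theorem whiskerLeft_unit_rightActionOfEntwining
    (hunit_r : (A ◁ η) ≫ μ = (ρ_ A).hom) {m : N ⊗ A ⟶ A ⊗ N}
    (hm : (N ◁ η) ≫ m = (ρ_ N).hom ≫ (λ_ N).inv ≫ (η ▷ N)) :
    ((A ⊗ N) ◁ η) ≫ rightActionOfEntwining μ m = (ρ_ (A ⊗ N)).hom := by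
  unfold rightActionOfEntwining
  calc ((A ⊗ N) ◁ η) ≫ (α_ A N A).hom ≫ (A ◁ m) ≫ (α_ A A N).inv ≫ (μ ▷ N)
      = (α_ A N (𝟙_ M)).hom ≫ (A ◁ ((N ◁ η) ≫ m)) ≫ (α_ A A N).inv ≫ (μ ▷ N) := by
        monoidal
    _ = (ρ_ (A ⊗ N)).hom ≫ ((ρ_ A).inv ▷ N) ≫ (((A ◁ η) ≫ μ) ▷ N) := by
        rw [hm]; monoidal
    _ = (ρ_ (A ⊗ N)).hom := by simp [hunit_r]

theorem whiskerLeft_mul_rightActionOfEntwining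
    (hassoc : (μ ▷ A) ≫ μ = (α_ A A A).hom ≫ (A ◁ μ) ≫ μ) {m : N ⊗ A ⟶ A ⊗ N}
    (hm : (N ◁ μ) ≫ m =
      (α_ N A A).inv ≫ (m ▷ A) ≫ (α_ A N A).hom ≫ (A ◁ m) ≫ (α_ A A N).inv ≫ (μ ▷ N)) :
    ((A ⊗ N) ◁ μ) ≫ rightActionOfEntwining μ m =
      (α_ (A ⊗ N) A A).inv ≫ (rightActionOfEntwining μ m ▷ A) ≫ rightActionOfEntwining μ m := by
  have hcompat := whiskerRight_rightActionOfEntwining μ hassoc m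
  calc ((A ⊗ N) ◁ μ) ≫ rightActionOfEntwining μ m
      = (α_ A N (A ⊗ A)).hom ≫ (A ◁ ((N ◁ μ) ≫ m)) ≫ (α_ A A N).inv ≫ (μ ▷ N) := by
        unfold rightActionOfEntwining; monoidal
    _ = (α_ (A ⊗ N) A A).inv ≫
          (((α_ A N A).hom ≫ (A ◁ m) ≫ (α_ A A N).inv) ▷ A) ≫ ((μ ▷ N) ▷ A) ≫
          rightActionOfEntwining μ m := by
        rw [hm, hcompat]; unfold rightActionOfEntwining; monoidal
    _ = (α_ (A ⊗ N) A A).inv ≫ (rightActionOfEntwining μ m ▷ A) ≫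
          rightActionOfEntwining μ m := by
        simp [rightActionOfEntwining]

theorem rightActionOfEntwining_entwiningOfRightAction
    (hunit_r : (A ◁ η) ≫ μ = (ρ_ A).hom) {r : (A ⊗ N) ⊗ A ⟶ A ⊗ N}
    (hr : ((μ ▷ N) ▷ A) ≫ r =
      ((α_ A A N).hom ▷ A) ≫ (α_ A (A ⊗ N) A).hom ≫ (A ◁ r) ≫ (α_ A A N).inv ≫ (μ ▷ N)) :
    rightActionOfEntwining μ (entwiningOfRightAction η r) = r := by
  calc rightActionOfEntwining μ (entwiningOfRightAction η r)
      = ((((ρ_ A).inv ≫ (A ◁ η)) ▷ N) ▷ A) ≫ ((α_ A A N).hom ▷ A) ≫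
          (α_ A (A ⊗ N) A).hom ≫ (A ◁ r) ≫ (α_ A A N).inv ≫ (μ ▷ N) := by
        unfold rightActionOfEntwining entwiningOfRightAction; monoidal
    _ = ((((ρ_ A).inv ≫ ((A ◁ η) ≫ μ)) ▷ N) ▷ A) ≫ r := by
        rw [← hr]; simp only [comp_whiskerRight, Category.assoc]
    _ = r := by simp [hunit_r]

theorem whiskerLeft_unit_entwiningOfRightAction {r : (A ⊗ N) ⊗ A ⟶ A ⊗ N}
    (hr : ((A ⊗ N) ◁ η) ≫ r = (ρ_ (A ⊗ N)).hom) :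
    (N ◁ η) ≫ entwiningOfRightAction η r = (ρ_ N).hom ≫ (λ_ N).inv ≫ (η ▷ N) := by
  calc (N ◁ η) ≫ entwiningOfRightAction η r
      = (((λ_ N).inv ≫ (η ▷ N)) ▷ 𝟙_ M) ≫ ((A ⊗ N) ◁ η) ≫ r := by
        rw [entwiningOfRightAction, ← Category.assoc, whisker_exchange, Category.assoc]
    _ = (ρ_ N).hom ≫ (λ_ N).inv ≫ (η ▷ N) := by rw [hr]; monoidal

theorem whiskerLeft_mul_entwiningOfRightAction
    (hunit_r : (A ◁ η) ≫ μ = (ρ_ A).hom) {r : (A ⊗ N) ⊗ A ⟶ A ⊗ N}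
    (hr_mul : ((A ⊗ N) ◁ μ) ≫ r = (α_ (A ⊗ N) A A).inv ≫ (r ▷ A) ≫ r)
    (hr_compat : ((μ ▷ N) ▷ A) ≫ r =
      ((α_ A A N).hom ▷ A) ≫ (α_ A (A ⊗ N) A).hom ≫ (A ◁ r) ≫ (α_ A A N).inv ≫ (μ ▷ N)) :
    (N ◁ μ) ≫ entwiningOfRightAction η r =
      (α_ N A A).inv ≫ (entwiningOfRightAction η r ▷ A) ≫ (α_ A N A).hom ≫
        (A ◁ entwiningOfRightAction η r) ≫ (α_ A A N).inv ≫ (μ ▷ N) := by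
  have hrecover := rightActionOfEntwining_entwiningOfRightAction μ η hunit_r hr_compat
  unfold rightActionOfEntwining at hrecover
  calc (N ◁ μ) ≫ entwiningOfRightAction η r
      = (((λ_ N).inv ≫ (η ▷ N)) ▷ (A ⊗ A)) ≫ ((A ⊗ N) ◁ μ) ≫ r := by
        rw [entwiningOfRightAction, ← Category.assoc, whisker_exchange, Category.assoc]
    _ = (α_ N A A).inv ≫ (entwiningOfRightAction η r ▷ A) ≫ r := by
        rw [hr_mul, entwiningOfRightAction]; monoidal
    _ = (α_ N A A).inv ≫ (entwiningOfRightAction η r ▷ A) ≫ (α_ A N A).hom ≫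
          (A ◁ entwiningOfRightAction η r) ≫ (α_ A A N).inv ≫ (μ ▷ N) := by
        rw [hrecover]

end CategoryTheory.MonoidalCategory

theorem stmt_3_general {M : Type*} [Category M] [MonoidalCategory M]
    (A N : M) (μ : A ⊗ A ⟶ A) (η : 𝟙_ M ⟶ A)
    (hassoc : (μ ▷ A) ≫ μ = (α_ A A A).hom ≫ (A ◁ μ) ≫ μ)
    (hunit_r : (A ◁ η) ≫ μ = (ρ_ A).hom) :
    (∃ r : (A ⊗ N) ⊗ A ⟶ A ⊗ N,
        ((A ⊗ N) ◁ η) ≫ r = (ρ_ (A ⊗ N)).hom ∧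
        ((A ⊗ N) ◁ μ) ≫ r = (α_ (A ⊗ N) A A).inv ≫ (r ▷ A) ≫ r ∧
        ((μ ▷ N) ▷ A) ≫ r =
          ((α_ A A N).hom ▷ A) ≫ (α_ A (A ⊗ N) A).hom ≫ (A ◁ r) ≫
            (α_ A A N).inv ≫ (μ ▷ N)) ↔
    (∃ m : N ⊗ A ⟶ A ⊗ N,
        (N ◁ μ) ≫ m =
          (α_ N A A).inv ≫ (m ▷ A) ≫ (α_ A N A).hom ≫ (A ◁ m) ≫
            (α_ A A N).inv ≫ (μ ▷ N) ∧
        (N ◁ η) ≫ m = (ρ_ N).hom ≫ (λ_ N).inv ≫ (η ▷ N)) := by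
  constructor
  · rintro ⟨r, hr_unit, hr_mul, hr_compat⟩
    exact ⟨entwiningOfRightAction η r,
      whiskerLeft_mul_entwiningOfRightAction μ η hunit_r hr_mul hr_compat,
      whiskerLeft_unit_entwiningOfRightAction η hr_unit⟩
  · rintro ⟨m, hm_mul, hm_unit⟩
    exact ⟨rightActionOfEntwining μ m,
      whiskerLeft_unit_rightActionOfEntwining μ η hunit_r hm_unit,
      whiskerLeft_mul_rightActionOfEntwining μ hassoc hm_mul,
      whiskerRight_rightActionOfEntwining μ hassoc m⟩

/-- Lemma 1.12: for a monoid `(A, μ, η)` and an object `N`, the existence of an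
`A`-bimodule structure on `A ⊗ N` whose left action is `μ ▷ N` is equivalent to the
existence of an entwining `N ⊗ A ⟶ A ⊗ N`. -/
theorem stmt_3 {M : Type*} [Category M] [MonoidalCategory M]
    (A N : M) (μ : A ⊗ A ⟶ A) (η : 𝟙_ M ⟶ A)
    (hassoc : (μ ▷ A) ≫ μ = (α_ A A A).hom ≫ (A ◁ μ) ≫ μ)
    (hunit_l : (η ▷ A) ≫ μ = (λ_ A).hom)
    (hunit_r : (A ◁ η) ≫ μ = (ρ_ A).hom) :
    (∃ r : (A ⊗ N) ⊗ A ⟶ A ⊗ N,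
        ((A ⊗ N) ◁ η) ≫ r = (ρ_ (A ⊗ N)).hom ∧
        ((A ⊗ N) ◁ μ) ≫ r = (α_ (A ⊗ N) A A).inv ≫ (r ▷ A) ≫ r ∧
        ((μ ▷ N) ▷ A) ≫ r =
          ((α_ A A N).hom ▷ A) ≫ (α_ A (A ⊗ N) A).hom ≫ (A ◁ r) ≫
            (α_ A A N).inv ≫ (μ ▷ N)) ↔
    (∃ m : N ⊗ A ⟶ A ⊗ N,
        (N ◁ μ) ≫ m =
          (α_ N A A).inv ≫ (m ▷ A) ≫ (α_ A N A).hom ≫ (A ◁ m) ≫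
            (α_ A A N).inv ≫ (μ ▷ N) ∧
        (N ◁ η) ≫ m = (ρ_ N).hom ≫ (λ_ N).inv ≫ (η ▷ N)) :=
  stmt_3_general A N μ η hassoc hunit_r
end

section
/- Let (C,Δ,ε) be a comonoid in M and let (R,𝔯,ξ,δ) be right cowreath data over C. Then C⊗R is a comonoid in M with comultiplication 𝚫 = (C⊗𝔯⊗R)∘(C⊗δ)∘(Δ⊗R) : C⊗R → (C⊗R)⊗(C⊗R) and counit ε∘ξ : C⊗R → 𝟙. Moreover, with this comonoid structure the morphism ξ : C⊗R → C is a morphism of comonoids from (C⊗R, 𝚫, ε∘ξ) to (C,Δ,ε). -/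
open CategoryTheory MonoidalCategory

set_option maxHeartbeats 4000000

/-- Proposition 1.6 (cowreath product): given a comonoid `(C, Δ, ε)` and right cowreath data
`(R, r, ξ, δ)` over `C`, the object `C ⊗ R` is a comonoid with comultiplication
`(C ⊗ r ⊗ R) ∘ (C ⊗ δ) ∘ (Δ ⊗ R)` and counit `ε ∘ ξ`, and `ξ : C ⊗ R ⟶ C` is a morphism
of comonoids. -/
theorem stmt_6 {M : Type*} [Category M] [MonoidalCategory M]
    (C R : M) (Δ : C ⟶ C ⊗ C) (ε : C ⟶ 𝟙_ M)
    (hcounit_l : Δ ≫ (ε ▷ C) = (λ_ C).inv)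
    (hcounit_r : Δ ≫ (C ◁ ε) = (ρ_ C).inv)
    (hcoassoc : Δ ≫ (Δ ▷ C) ≫ (α_ C C C).hom = Δ ≫ (C ◁ Δ))
    (r : C ⊗ R ⟶ R ⊗ C)
    (hr1 : r ≫ (R ◁ Δ) =
      (Δ ▷ R) ≫ (α_ C C R).hom ≫ (C ◁ r) ≫ (α_ C R C).inv ≫ (r ▷ C) ≫ (α_ R C C).hom)
    (hr2 : r ≫ (R ◁ ε) ≫ (ρ_ R).hom = (ε ▷ R) ≫ (λ_ R).hom)
    (ξ : C ⊗ R ⟶ C) (δ : C ⊗ R ⟶ (C ⊗ R) ⊗ R)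
    -- left C-colinearity of ξ and δ
    (hlξ : ξ ≫ Δ = (Δ ▷ R) ≫ (α_ C C R).hom ≫ (C ◁ ξ))
    (hlδ : δ ≫ ((Δ ▷ R) ▷ R) =
      (Δ ▷ R) ≫ (α_ C C R).hom ≫ (C ◁ δ) ≫ (α_ C (C ⊗ R) R).inv ≫ ((α_ C C R).inv ▷ R))
    -- right C-colinearity of ξ and δ
    (hrξ : ξ ≫ Δ = (Δ ▷ R) ≫ (α_ C C R).hom ≫ (C ◁ r) ≫ (α_ C R C).inv ≫ (ξ ▷ C))
    (hrδ : δ ≫ ((Δ ▷ R) ▷ R) ≫ ((α_ C C R).hom ▷ R) ≫ (α_ C (C ⊗ R) R).hom ≫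
        (C ◁ ((r ▷ R) ≫ (α_ R C R).hom ≫ (R ◁ r) ≫ (α_ R R C).inv)) ≫
        (α_ C (R ⊗ R) C).inv ≫ ((α_ C R R).inv ▷ C) =
      (Δ ▷ R) ≫ (α_ C C R).hom ≫ (C ◁ r) ≫ (α_ C R C).inv ≫ (δ ▷ C))
    -- counit law, compatibility, coassociativity of the cowreath data
    (hcu : δ ≫ (ξ ▷ R) = 𝟙 (C ⊗ R))
    (hcomp : δ ≫ (r ▷ R) ≫ (α_ R C R).hom ≫ (R ◁ ξ) = r)
    (hcoa : δ ≫ (δ ▷ R) ≫ ((r ▷ R) ▷ R) ≫ ((α_ R C R).hom ▷ R) ≫ (α_ R (C ⊗ R) R).hom =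
      δ ≫ (r ▷ R) ≫ (α_ R C R).hom ≫ (R ◁ δ)) :
    ∀ D2 : C ⊗ R ⟶ (C ⊗ R) ⊗ (C ⊗ R),
      D2 = (Δ ▷ R) ≫ (α_ C C R).hom ≫ (C ◁ δ) ≫ (C ◁ (r ▷ R)) ≫
          (C ◁ (α_ R C R).hom) ≫ (α_ C R (C ⊗ R)).inv →
      -- C ⊗ R is a comonoid
      (D2 ≫ ((ξ ≫ ε) ▷ (C ⊗ R)) = (λ_ (C ⊗ R)).inv ∧
       D2 ≫ ((C ⊗ R) ◁ (ξ ≫ ε)) = (ρ_ (C ⊗ R)).inv ∧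
       D2 ≫ (D2 ▷ (C ⊗ R)) ≫ (α_ (C ⊗ R) (C ⊗ R) (C ⊗ R)).hom = D2 ≫ ((C ⊗ R) ◁ D2)) ∧
      -- ξ is a morphism of comonoids
      (ξ ≫ ε = ξ ≫ ε ∧ ξ ≫ Δ = D2 ≫ (ξ ⊗ₘ ξ)) := by
  intro D2 hD2
  subst hD2
  refine ⟨⟨?_, ?_, ?_⟩, rfl, ?_⟩
  · calc _ = ((Δ ▷ R) ≫ (α_ C C R).hom ≫ (C ◁ δ) ≫ (α_ C (C ⊗ R) R).inv ≫ ((α_ C C R).inv ▷ R)) ≫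
            ((((α_ C C R).hom ≫ (C ◁ r) ≫ (α_ C R C).inv ≫ (ξ ▷ C) ≫ (ε ▷ C)) ▷ R) ⊗≫ 𝟙 (𝟙_ M ⊗ (C ⊗ R))) := by
            monoidal
        _ = (δ ≫ ((Δ ▷ R) ▷ R)) ≫
            ((((α_ C C R).hom ≫ (C ◁ r) ≫ (α_ C R C).inv ≫ (ξ ▷ C) ≫ (ε ▷ C)) ▷ R) ⊗≫ 𝟙 (𝟙_ M ⊗ (C ⊗ R))) := by
            rw [← hlδ]
        _ = δ ≫ (((Δ ▷ R) ≫ (α_ C C R).hom ≫ (C ◁ r) ≫ (α_ C R C).inv ≫ (ξ ▷ C)) ▷ R) ≫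
            (((ε ▷ C) ▷ R) ⊗≫ 𝟙 (𝟙_ M ⊗ (C ⊗ R))) := by monoidal
        _ = δ ≫ ((ξ ≫ Δ) ▷ R) ≫ (((ε ▷ C) ▷ R) ⊗≫ 𝟙 (𝟙_ M ⊗ (C ⊗ R))) := by rw [← hrξ]
        _ = (δ ≫ (ξ ▷ R)) ≫ (((Δ ≫ (ε ▷ C)) ▷ R) ⊗≫ 𝟙 (𝟙_ M ⊗ (C ⊗ R))) := by monoidal
        _ = 𝟙 (C ⊗ R) ≫ (((λ_ C).inv ▷ R) ⊗≫ 𝟙 (𝟙_ M ⊗ (C ⊗ R))) := by rw [hcu, hcounit_l]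
        _ = (λ_ (C ⊗ R)).inv := by monoidal
  · calc _ = (Δ ▷ R) ⊗≫ (C ◁ (δ ≫ (r ▷ R) ≫ (α_ R C R).hom ≫ (R ◁ ξ))) ⊗≫
            (C ◁ (R ◁ ε)) ⊗≫ 𝟙 ((C ⊗ R) ⊗ 𝟙_ M) := by monoidal
        _ = (Δ ▷ R) ⊗≫ (C ◁ (r ≫ (R ◁ ε) ≫ (ρ_ R).hom)) ⊗≫ 𝟙 ((C ⊗ R) ⊗ 𝟙_ M) := by
            rw [hcomp]; monoidal
        _ = (Δ ▷ R) ⊗≫ (C ◁ ((ε ▷ R) ≫ (λ_ R).hom)) ⊗≫ 𝟙 ((C ⊗ R) ⊗ 𝟙_ M) := by rw [hr2]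
        _ = ((Δ ≫ (C ◁ ε)) ▷ R) ⊗≫ 𝟙 ((C ⊗ R) ⊗ 𝟙_ M) := by monoidal
        _ = ((ρ_ C).inv ▷ R) ⊗≫ 𝟙 ((C ⊗ R) ⊗ 𝟙_ M) := by rw [hcounit_r]
        _ = (ρ_ (C ⊗ R)).inv := by monoidal
  · calc _ = (Δ ▷ R) ⊗≫ ((C ◁ (δ ≫ (r ▷ R) ≫ (α_ R C R).hom)) ≫ (Δ ▷ (R ⊗ (C ⊗ R)))) ⊗≫
            (C ◁ ((δ ≫ (r ▷ R) ≫ (α_ R C R).hom) ▷ (C ⊗ R))) ⊗≫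
            𝟙 ((C ⊗ R) ⊗ ((C ⊗ R) ⊗ (C ⊗ R))) := by monoidal
        _ = (Δ ▷ R) ⊗≫ ((Δ ▷ (C ⊗ R)) ≫ ((C ⊗ C) ◁ (δ ≫ (r ▷ R) ≫ (α_ R C R).hom))) ⊗≫
            (C ◁ ((δ ≫ (r ▷ R) ≫ (α_ R C R).hom) ▷ (C ⊗ R))) ⊗≫
            𝟙 ((C ⊗ R) ⊗ ((C ⊗ R) ⊗ (C ⊗ R))) := by rw [whisker_exchange]
        _ = ((Δ ≫ (Δ ▷ C) ≫ (α_ C C C).hom) ▷ R) ⊗≫ ((C ⊗ C) ◁ (δ ≫ (r ▷ R) ≫ (α_ R C R).hom)) ⊗≫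
            (C ◁ ((δ ≫ (r ▷ R) ≫ (α_ R C R).hom) ▷ (C ⊗ R))) ⊗≫
            𝟙 ((C ⊗ R) ⊗ ((C ⊗ R) ⊗ (C ⊗ R))) := by monoidal
        _ = ((Δ ≫ (C ◁ Δ)) ▷ R) ⊗≫ ((C ⊗ C) ◁ (δ ≫ (r ▷ R) ≫ (α_ R C R).hom)) ⊗≫
            (C ◁ ((δ ≫ (r ▷ R) ≫ (α_ R C R).hom) ▷ (C ⊗ R))) ⊗≫
            𝟙 ((C ⊗ R) ⊗ ((C ⊗ R) ⊗ (C ⊗ R))) := by rw [hcoassoc]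
        -- now LHS = (Δ ▷ R) ≫ C ◁ W ; expose hlδ-RHS inside W
        _ = (Δ ▷ R) ⊗≫ (C ◁ (((Δ ▷ R) ≫ (α_ C C R).hom ≫ (C ◁ δ) ≫ (α_ C (C ⊗ R) R).inv ≫
              ((α_ C C R).inv ▷ R)) ≫ ((α_ C C R).hom ▷ R) ≫ ((C ◁ r) ▷ R) ⊗≫
              (((δ ≫ (r ▷ R) ≫ (α_ R C R).hom) ▷ C) ▷ R))) ⊗≫
            𝟙 ((C ⊗ R) ⊗ ((C ⊗ R) ⊗ (C ⊗ R))) := by monoidal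
        _ = (Δ ▷ R) ⊗≫ (C ◁ ((δ ≫ ((Δ ▷ R) ▷ R)) ≫ ((α_ C C R).hom ▷ R) ≫ ((C ◁ r) ▷ R) ⊗≫
              (((δ ≫ (r ▷ R) ≫ (α_ R C R).hom) ▷ C) ▷ R))) ⊗≫
            𝟙 ((C ⊗ R) ⊗ ((C ⊗ R) ⊗ (C ⊗ R))) := by rw [← hlδ]
        -- regroup to δ ≫ (K ▷ R), exposing hrδ-RHS inside K
        _ = (Δ ▷ R) ⊗≫ (C ◁ (δ ≫ ((((Δ ▷ R) ≫ (α_ C C R).hom ≫ (C ◁ r) ≫ (α_ C R C).inv ≫ (δ ▷ C)) ⊗≫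
              (((r ▷ R) ≫ (α_ R C R).hom) ▷ C)) ▷ R))) ⊗≫
            𝟙 ((C ⊗ R) ⊗ ((C ⊗ R) ⊗ (C ⊗ R))) := by monoidal
        _ = (Δ ▷ R) ⊗≫ (C ◁ (δ ≫ (((δ ≫ ((Δ ▷ R) ▷ R) ≫ ((α_ C C R).hom ▷ R) ≫ (α_ C (C ⊗ R) R).hom ≫
              (C ◁ ((r ▷ R) ≫ (α_ R C R).hom ≫ (R ◁ r) ≫ (α_ R R C).inv)) ≫
              (α_ C (R ⊗ R) C).inv ≫ ((α_ C R R).inv ▷ C)) ⊗≫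
              (((r ▷ R) ≫ (α_ R C R).hom) ▷ C)) ▷ R))) ⊗≫
            𝟙 ((C ⊗ R) ⊗ ((C ⊗ R) ⊗ (C ⊗ R))) := by rw [hrδ]
        -- exchange the two inner r's
        _ = (Δ ▷ R) ⊗≫ (C ◁ (δ ≫ ((δ ≫ ((Δ ▷ R) ▷ R) ≫ ((α_ C C R).hom ▷ R) ≫ ((C ◁ r) ▷ R) ⊗≫
              (((C ⊗ R) ◁ r) ≫ (r ▷ (R ⊗ C)))) ▷ R))) ⊗≫
            𝟙 ((C ⊗ R) ⊗ ((C ⊗ R) ⊗ (C ⊗ R))) := by monoidal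
        _ = (Δ ▷ R) ⊗≫ (C ◁ (δ ≫ ((δ ≫ ((Δ ▷ R) ▷ R) ≫ ((α_ C C R).hom ▷ R) ≫ ((C ◁ r) ▷ R) ⊗≫
              ((r ▷ (C ⊗ R)) ≫ ((R ⊗ C) ◁ r))) ▷ R))) ⊗≫
            𝟙 ((C ⊗ R) ⊗ ((C ⊗ R) ⊗ (C ⊗ R))) := by rw [whisker_exchange]
        -- expose hr1-RHS
        _ = (Δ ▷ R) ⊗≫ (C ◁ (δ ≫ ((δ ≫ (((Δ ▷ R) ≫ (α_ C C R).hom ≫ (C ◁ r) ≫ (α_ C R C).inv ≫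
              (r ▷ C) ≫ (α_ R C C).hom) ▷ R) ⊗≫ ((R ⊗ C) ◁ r)) ▷ R))) ⊗≫
            𝟙 ((C ⊗ R) ⊗ ((C ⊗ R) ⊗ (C ⊗ R))) := by monoidal
        _ = (Δ ▷ R) ⊗≫ (C ◁ (δ ≫ ((δ ≫ ((r ≫ (R ◁ Δ)) ▷ R) ⊗≫ ((R ⊗ C) ◁ r)) ▷ R))) ⊗≫
            𝟙 ((C ⊗ R) ⊗ ((C ⊗ R) ⊗ (C ⊗ R))) := by rw [← hr1]
        -- expose hcoa-LHS
        _ = (Δ ▷ R) ⊗≫ (C ◁ ((δ ≫ (δ ▷ R) ≫ ((r ▷ R) ▷ R) ≫ ((α_ R C R).hom ▷ R) ≫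
              (α_ R (C ⊗ R) R).hom) ≫ (R ◁ (((Δ ▷ R) ≫ (α_ C C R).hom ≫ (C ◁ r)) ▷ R)))) ⊗≫
            𝟙 ((C ⊗ R) ⊗ ((C ⊗ R) ⊗ (C ⊗ R))) := by monoidal
        _ = (Δ ▷ R) ⊗≫ (C ◁ ((δ ≫ (r ▷ R) ≫ (α_ R C R).hom ≫ (R ◁ δ)) ≫
              (R ◁ (((Δ ▷ R) ≫ (α_ C C R).hom ≫ (C ◁ r)) ▷ R)))) ⊗≫
            𝟙 ((C ⊗ R) ⊗ ((C ⊗ R) ⊗ (C ⊗ R))) := by rw [hcoa]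
        -- expose hlδ-LHS
        _ = (Δ ▷ R) ⊗≫ (C ◁ (δ ≫ (r ▷ R) ≫ (α_ R C R).hom ≫
              (R ◁ ((δ ≫ ((Δ ▷ R) ▷ R)) ≫ ((α_ C C R).hom ▷ R) ≫ ((C ◁ r) ▷ R))))) ⊗≫
            𝟙 ((C ⊗ R) ⊗ ((C ⊗ R) ⊗ (C ⊗ R))) := by monoidal
        _ = (Δ ▷ R) ⊗≫ (C ◁ (δ ≫ (r ▷ R) ≫ (α_ R C R).hom ≫
              (R ◁ ((((Δ ▷ R) ≫ (α_ C C R).hom ≫ (C ◁ δ) ≫ (α_ C (C ⊗ R) R).inv ≫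
                ((α_ C C R).inv ▷ R))) ≫ ((α_ C C R).hom ▷ R) ≫ ((C ◁ r) ▷ R))))) ⊗≫
            𝟙 ((C ⊗ R) ⊗ ((C ⊗ R) ⊗ (C ⊗ R))) := by rw [hlδ]
        _ = _ := by monoidal
  · symm
    calc _ = ((Δ ▷ R) ≫ (α_ C C R).hom ≫ (C ◁ δ) ≫ (C ◁ (r ▷ R)) ≫
            (C ◁ (α_ R C R).hom) ≫ (α_ C R (C ⊗ R)).inv) ≫ ((C ⊗ R) ◁ ξ) ≫ (ξ ▷ C) := by
          rw [tensorHom_def']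
      _ = (Δ ▷ R) ⊗≫ (C ◁ (δ ≫ (r ▷ R) ≫ (α_ R C R).hom ≫ (R ◁ ξ))) ⊗≫ (ξ ▷ C) ⊗≫ 𝟙 (C ⊗ C) := by
          monoidal
      _ = (Δ ▷ R) ⊗≫ (C ◁ r) ⊗≫ (ξ ▷ C) ⊗≫ 𝟙 (C ⊗ C) := by rw [hcomp]
      _ = (Δ ▷ R) ≫ (α_ C C R).hom ≫ (C ◁ r) ≫ (α_ C R C).inv ≫ (ξ ▷ C) := by monoidal
      _ = ξ ≫ Δ := hrξ.symm
end

section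
/- Let (C,Δ,ε) be a comonoid in M, let (R,𝔯,ξ,δ) be right cowreath data over C, and let (C⊗R, 𝚫, ε∘ξ) be the associated cowreath-product comonoid, where 𝚫 = (C⊗𝔯⊗R)∘(C⊗δ)∘(Δ⊗R). Let (D,Δ',ε') be a comonoid, let α : D → C be a morphism of comonoids, and let β : D → R be a morphism satisfying ξ∘(C⊗β) = C⊗ε' (as morphisms C⊗D → C, using the right unitor) and δ∘(C⊗β) = (C⊗β⊗β)∘(C⊗Δ'). If moreover 𝔯∘(α⊗β)∘Δ' = (β⊗α)∘Δ', then there exists a unique morphism of comonoids γ : D → C⊗R such that ξ∘γ = α and (ε⊗R)∘γ = β (the latter as morphisms D → R, using the left unitor); explicitly γ = (α⊗β)∘Δ'. -/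
open CategoryTheory MonoidalCategory

set_option maxHeartbeats 1000000

/-- Proposition 1.8 (universal property of the cowreath product): given a comonoid
`(C, Δ, ε)`, right cowreath data `(R, r, ξ, δ)` over `C` with cowreath product comonoid
`(C ⊗ R, 𝚫, ε ∘ ξ)`, a comonoid `(D, Δ', ε')`, a comonoid morphism `a : D ⟶ C`, and a
morphism `b : D ⟶ R` satisfying the stated conditions, there is a unique comonoid morphism
`γ : D ⟶ C ⊗ R` with `ξ ∘ γ = a` and `(ε ⊗ R) ∘ γ = b`; explicitly `γ = (a ⊗ b) ∘ Δ'`. -/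
theorem stmt_7 {M : Type*} [Category M] [MonoidalCategory M]
    (C R : M) (Δ : C ⟶ C ⊗ C) (ε : C ⟶ 𝟙_ M)
    (hcounit_l : Δ ≫ (ε ▷ C) = (λ_ C).inv)
    (hcounit_r : Δ ≫ (C ◁ ε) = (ρ_ C).inv)
    (hcoassoc : Δ ≫ (Δ ▷ C) ≫ (α_ C C C).hom = Δ ≫ (C ◁ Δ))
    (r : C ⊗ R ⟶ R ⊗ C)
    (hr1 : r ≫ (R ◁ Δ) =
      (Δ ▷ R) ≫ (α_ C C R).hom ≫ (C ◁ r) ≫ (α_ C R C).inv ≫ (r ▷ C) ≫ (α_ R C C).hom)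
    (hr2 : r ≫ (R ◁ ε) ≫ (ρ_ R).hom = (ε ▷ R) ≫ (λ_ R).hom)
    (ξ : C ⊗ R ⟶ C) (δ : C ⊗ R ⟶ (C ⊗ R) ⊗ R)
    (hlξ : ξ ≫ Δ = (Δ ▷ R) ≫ (α_ C C R).hom ≫ (C ◁ ξ))
    (hlδ : δ ≫ ((Δ ▷ R) ▷ R) =
      (Δ ▷ R) ≫ (α_ C C R).hom ≫ (C ◁ δ) ≫ (α_ C (C ⊗ R) R).inv ≫ ((α_ C C R).inv ▷ R))
    (hrξ : ξ ≫ Δ = (Δ ▷ R) ≫ (α_ C C R).hom ≫ (C ◁ r) ≫ (α_ C R C).inv ≫ (ξ ▷ C))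
    (hrδ : δ ≫ ((Δ ▷ R) ▷ R) ≫ ((α_ C C R).hom ▷ R) ≫ (α_ C (C ⊗ R) R).hom ≫
        (C ◁ ((r ▷ R) ≫ (α_ R C R).hom ≫ (R ◁ r) ≫ (α_ R R C).inv)) ≫
        (α_ C (R ⊗ R) C).inv ≫ ((α_ C R R).inv ▷ C) =
      (Δ ▷ R) ≫ (α_ C C R).hom ≫ (C ◁ r) ≫ (α_ C R C).inv ≫ (δ ▷ C))
    (hcu : δ ≫ (ξ ▷ R) = 𝟙 (C ⊗ R))
    (hcomp : δ ≫ (r ▷ R) ≫ (α_ R C R).hom ≫ (R ◁ ξ) = r)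
    (hcoa : δ ≫ (δ ▷ R) ≫ ((r ▷ R) ▷ R) ≫ ((α_ R C R).hom ▷ R) ≫ (α_ R (C ⊗ R) R).hom =
      δ ≫ (r ▷ R) ≫ (α_ R C R).hom ≫ (R ◁ δ))
    -- the comonoid (D, Δ', ε')
    (D : M) (Δ' : D ⟶ D ⊗ D) (ε' : D ⟶ 𝟙_ M)
    (hcounit_l' : Δ' ≫ (ε' ▷ D) = (λ_ D).inv)
    (hcounit_r' : Δ' ≫ (D ◁ ε') = (ρ_ D).inv)
    (hcoassoc' : Δ' ≫ (Δ' ▷ D) ≫ (α_ D D D).hom = Δ' ≫ (D ◁ Δ'))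
    -- a comonoid morphism a : D ⟶ C
    (a : D ⟶ C) (ha1 : a ≫ ε = ε') (ha2 : a ≫ Δ = Δ' ≫ (a ⊗ₘ a))
    -- a morphism b : D ⟶ R with the stated properties
    (b : D ⟶ R)
    (hb1 : (C ◁ b) ≫ ξ = (C ◁ ε') ≫ (ρ_ C).hom)
    (hb2 : (C ◁ b) ≫ δ =
      (C ◁ Δ') ≫ (α_ C D D).inv ≫ ((C ◁ b) ▷ D) ≫ ((C ⊗ R) ◁ b))
    (hab : Δ' ≫ (a ⊗ₘ b) ≫ r = Δ' ≫ (b ⊗ₘ a)) :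
    ∀ D2 : C ⊗ R ⟶ (C ⊗ R) ⊗ (C ⊗ R),
      D2 = (Δ ▷ R) ≫ (α_ C C R).hom ≫ (C ◁ δ) ≫ (C ◁ (r ▷ R)) ≫
          (C ◁ (α_ R C R).hom) ≫ (α_ C R (C ⊗ R)).inv →
      (∃! γ : D ⟶ C ⊗ R,
          (γ ≫ ξ ≫ ε = ε' ∧ γ ≫ D2 = Δ' ≫ (γ ⊗ₘ γ)) ∧
          γ ≫ ξ = a ∧ γ ≫ (ε ▷ R) ≫ (λ_ R).hom = b) ∧
      ((Δ' ≫ (a ⊗ₘ b)) ≫ ξ ≫ ε = ε' ∧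
        (Δ' ≫ (a ⊗ₘ b)) ≫ D2 = Δ' ≫ ((Δ' ≫ (a ⊗ₘ b)) ⊗ₘ (Δ' ≫ (a ⊗ₘ b)))) ∧
      (Δ' ≫ (a ⊗ₘ b)) ≫ ξ = a ∧ (Δ' ≫ (a ⊗ₘ b)) ≫ (ε ▷ R) ≫ (λ_ R).hom = b := by
  intro D2 hD2
  subst hD2
  -- abbreviation-free auxiliary facts
  have hco' : Δ' ≫ (Δ' ▷ D) = Δ' ≫ (D ◁ Δ') ≫ (α_ D D D).inv := by
    rw [← reassoc_of% hcoassoc']; simp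
  have hab' : Δ' ≫ (a ▷ D) ≫ (C ◁ b) ≫ r = Δ' ≫ (b ▷ D) ≫ (R ◁ a) := by
    simpa only [MonoidalCategory.tensorHom_def, Category.assoc] using hab
  have hJ : (a ▷ D) ≫ (C ◁ b) ≫ δ ≫ (r ▷ R) ≫ (α_ R C R).hom =
      (D ◁ Δ') ≫ (α_ D D D).inv ≫ (((a ▷ D) ≫ (C ◁ b) ≫ r) ▷ D) ≫
        (α_ R C D).hom ≫ (R ◁ (C ◁ b)) := by
    rw [reassoc_of% hb2, whisker_exchange_assoc, ← whisker_exchange_assoc]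
    monoidal
  have hab2 : (C ◁ (Δ' ▷ D)) ≫ (C ◁ (((a ▷ D) ≫ (C ◁ b) ≫ r) ▷ D)) =
      C ◁ ((Δ' ≫ (b ▷ D) ≫ (R ◁ a)) ▷ D) := by
    rw [← MonoidalCategory.whiskerLeft_comp, ← comp_whiskerRight, hab']
  have hco4 : (D ◁ Δ') ≫ (D ◁ (Δ' ▷ D)) ≫ (D ◁ (α_ D D D).hom) =
      (D ◁ Δ') ≫ (D ◁ (D ◁ Δ')) := by
    simp only [← MonoidalCategory.whiskerLeft_comp, Category.assoc, hcoassoc']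
  have hlδ' : (Δ ▷ R) ≫ (α_ C C R).hom ≫ (C ◁ δ) =
      δ ≫ ((Δ ▷ R) ▷ R) ≫ ((α_ C C R).hom ▷ R) ≫ (α_ C (C ⊗ R) R).hom := by
    rw [reassoc_of% hlδ]; simp
  -- the cowreath comultiplication is counital against (ξ, (ε ▷ R) ≫ λ)
  have hcu2 : ((Δ ▷ R) ≫ (α_ C C R).hom ≫ (C ◁ δ) ≫ (C ◁ (r ▷ R)) ≫
      (C ◁ (α_ R C R).hom) ≫ (α_ C R (C ⊗ R)).inv) ≫
        (ξ ⊗ₘ ((ε ▷ R) ≫ (λ_ R).hom)) = 𝟙 (C ⊗ R) := by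
    calc ((Δ ▷ R) ≫ (α_ C C R).hom ≫ (C ◁ δ) ≫ (C ◁ (r ▷ R)) ≫
        (C ◁ (α_ R C R).hom) ≫ (α_ C R (C ⊗ R)).inv) ≫
          (ξ ⊗ₘ ((ε ▷ R) ≫ (λ_ R).hom))
        = (Δ ▷ R) ≫ (α_ C C R).hom ≫ (C ◁ δ) ≫
          (C ◁ ((r ≫ (R ◁ ε) ≫ (ρ_ R).hom) ▷ R)) ≫ (α_ C R R).inv ≫ (ξ ▷ R) := by
          rw [tensorHom_def']; monoidal
      _ = (Δ ▷ R) ≫ (α_ C C R).hom ≫ (C ◁ δ) ≫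
          (C ◁ (((ε ▷ R) ≫ (λ_ R).hom) ▷ R)) ≫ (α_ C R R).inv ≫ (ξ ▷ R) := by
          rw [hr2]
      _ = δ ≫ ((Δ ▷ R) ▷ R) ≫ ((α_ C C R).hom ▷ R) ≫ (α_ C (C ⊗ R) R).hom ≫
          (C ◁ (((ε ▷ R) ≫ (λ_ R).hom) ▷ R)) ≫ (α_ C R R).inv ≫ (ξ ▷ R) := by
          rw [reassoc_of% hlδ']
      _ = δ ≫ (((Δ ≫ (C ◁ ε) ≫ (ρ_ C).hom) ▷ R) ▷ R) ≫ (ξ ▷ R) := by monoidal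
      _ = δ ≫ (ξ ▷ R) := by rw [reassoc_of% hcounit_r]; simp
      _ = 𝟙 (C ⊗ R) := hcu
  -- γ₀ := Δ' ≫ (a ⊗ₘ b) satisfies the two projection properties
  have hL1 : Δ' ≫ (a ⊗ₘ b) ≫ ξ = a := by
    rw [MonoidalCategory.tensorHom_def]
    simp only [Category.assoc]
    rw [hb1, ← whisker_exchange_assoc, reassoc_of% hcounit_r']
    monoidal
  have hL2 : Δ' ≫ (a ⊗ₘ b) ≫ (ε ▷ R) ≫ (λ_ R).hom = b := by
    rw [tensorHom_def']
    simp only [Category.assoc]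
    rw [← comp_whiskerRight_assoc, ha1, whisker_exchange_assoc,
      reassoc_of% hcounit_l']
    monoidal
  -- γ₀ is comultiplicative
  have hL4 : Δ' ≫ (a ⊗ₘ b) ≫ ((Δ ▷ R) ≫ (α_ C C R).hom ≫ (C ◁ δ) ≫
      (C ◁ (r ▷ R)) ≫ (C ◁ (α_ R C R).hom) ≫ (α_ C R (C ⊗ R)).inv) =
      Δ' ≫ ((Δ' ≫ (a ⊗ₘ b)) ⊗ₘ (Δ' ≫ (a ⊗ₘ b))) := by
    calc Δ' ≫ (a ⊗ₘ b) ≫ ((Δ ▷ R) ≫ (α_ C C R).hom ≫ (C ◁ δ) ≫ (C ◁ (r ▷ R)) ≫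
        (C ◁ (α_ R C R).hom) ≫ (α_ C R (C ⊗ R)).inv)
        = Δ' ≫ (D ◁ Δ') ≫ (α_ D D D).inv ≫ ((a ▷ D) ▷ D) ≫ ((C ◁ a) ▷ D) ≫
          ((C ⊗ C) ◁ b) ≫ (α_ C C R).hom ≫ (C ◁ δ) ≫ (C ◁ (r ▷ R)) ≫
          (C ◁ (α_ R C R).hom) ≫ (α_ C R (C ⊗ R)).inv := by
          rw [MonoidalCategory.tensorHom_def]
          simp only [Category.assoc]
          rw [whisker_exchange_assoc, ← comp_whiskerRight_assoc, ha2,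
            MonoidalCategory.tensorHom_def a a]
          simp only [comp_whiskerRight, Category.assoc]
          rw [reassoc_of% hco']
      _ = Δ' ≫ (D ◁ Δ') ≫ (a ▷ (D ⊗ D)) ≫
          (C ◁ ((a ▷ D) ≫ (C ◁ b) ≫ δ ≫ (r ▷ R) ≫ (α_ R C R).hom)) ≫
          (α_ C R (C ⊗ R)).inv := by monoidal
      _ = Δ' ≫ (D ◁ Δ') ≫ (a ▷ (D ⊗ D)) ≫
          (C ◁ ((D ◁ Δ') ≫ (α_ D D D).inv ≫ (((a ▷ D) ≫ (C ◁ b) ≫ r) ▷ D) ≫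
            (α_ R C D).hom ≫ (R ◁ (C ◁ b)))) ≫ (α_ C R (C ⊗ R)).inv := by
          rw [hJ]
      _ = Δ' ≫ (D ◁ Δ') ≫ (D ◁ (D ◁ Δ')) ≫ (D ◁ (α_ D D D).inv) ≫
          (a ▷ ((D ⊗ D) ⊗ D)) ≫ (C ◁ (((a ▷ D) ≫ (C ◁ b) ≫ r) ▷ D)) ≫
          (C ◁ (α_ R C D).hom) ≫ (C ◁ (R ◁ (C ◁ b))) ≫ (α_ C R (C ⊗ R)).inv := by
          simp only [MonoidalCategory.whiskerLeft_comp, Category.assoc]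
          rw [← whisker_exchange_assoc a (D ◁ Δ'),
            ← whisker_exchange_assoc a (α_ D D D).inv]
      _ = Δ' ≫ (D ◁ Δ') ≫ (D ◁ (Δ' ▷ D)) ≫
          (a ▷ ((D ⊗ D) ⊗ D)) ≫ (C ◁ (((a ▷ D) ≫ (C ◁ b) ≫ r) ▷ D)) ≫
          (C ◁ (α_ R C D).hom) ≫ (C ◁ (R ◁ (C ◁ b))) ≫ (α_ C R (C ⊗ R)).inv := by
          rw [← reassoc_of% hco4, whiskerLeft_hom_inv_assoc]
      _ = Δ' ≫ (D ◁ Δ') ≫ (a ▷ (D ⊗ D)) ≫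
          (C ◁ ((Δ' ≫ (b ▷ D) ≫ (R ◁ a)) ▷ D)) ≫
          (C ◁ (α_ R C D).hom) ≫ (C ◁ (R ◁ (C ◁ b))) ≫ (α_ C R (C ⊗ R)).inv := by
          rw [whisker_exchange_assoc a (Δ' ▷ D), reassoc_of% hab2]
      _ = Δ' ≫ (D ◁ Δ') ≫ (a ▷ (D ⊗ D)) ≫
          (C ◁ ((Δ' ▷ D) ≫ (α_ D D D).hom ≫ (b ▷ (D ⊗ D)) ≫ (R ◁ (a ▷ D)) ≫
            (R ◁ (C ◁ b)))) ≫ (α_ C R (C ⊗ R)).inv := by monoidal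
      _ = Δ' ≫ (D ◁ Δ') ≫ (D ◁ (Δ' ▷ D)) ≫ (D ◁ (α_ D D D).hom) ≫
          (a ▷ (D ⊗ (D ⊗ D))) ≫ (C ◁ (b ▷ (D ⊗ D))) ≫ (C ◁ (R ◁ (a ▷ D))) ≫
          (C ◁ (R ◁ (C ◁ b))) ≫ (α_ C R (C ⊗ R)).inv := by
          simp only [MonoidalCategory.whiskerLeft_comp, Category.assoc]
          rw [← whisker_exchange_assoc a (Δ' ▷ D),
            ← whisker_exchange_assoc a (α_ D D D).hom]
      _ = Δ' ≫ (D ◁ Δ') ≫ (D ◁ (D ◁ Δ')) ≫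
          (a ▷ (D ⊗ (D ⊗ D))) ≫ (C ◁ (b ▷ (D ⊗ D))) ≫ (C ◁ (R ◁ (a ▷ D))) ≫
          (C ◁ (R ◁ (C ◁ b))) ≫ (α_ C R (C ⊗ R)).inv := by
          rw [reassoc_of% hco4]
      _ = Δ' ≫ ((Δ' ≫ (a ⊗ₘ b)) ⊗ₘ (Δ' ≫ (a ⊗ₘ b))) := by
          rw [← tensorHom_comp_tensorHom]
          rw [tensorHom_def' Δ' Δ']
          simp only [Category.assoc]
          rw [whisker_exchange_assoc Δ' Δ', reassoc_of% hco']
          simp only [MonoidalCategory.tensorHom_def, MonoidalCategory.whiskerLeft_comp,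
            comp_whiskerRight, Category.assoc]
          monoidal
  -- the four properties in the exact shapes required by the goal
  have e1 : (Δ' ≫ (a ⊗ₘ b)) ≫ ξ = a := by
    simp only [Category.assoc]; exact hL1
  have e0 : (Δ' ≫ (a ⊗ₘ b)) ≫ ξ ≫ ε = ε' := by
    rw [← Category.assoc, e1, ha1]
  have e2 : (Δ' ≫ (a ⊗ₘ b)) ≫ (ε ▷ R) ≫ (λ_ R).hom = b := by
    simp only [Category.assoc]; exact hL2
  have e3 : (Δ' ≫ (a ⊗ₘ b)) ≫ ((Δ ▷ R) ≫ (α_ C C R).hom ≫ (C ◁ δ) ≫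
      (C ◁ (r ▷ R)) ≫ (C ◁ (α_ R C R).hom) ≫ (α_ C R (C ⊗ R)).inv) =
      Δ' ≫ ((Δ' ≫ (a ⊗ₘ b)) ⊗ₘ (Δ' ≫ (a ⊗ₘ b))) := by
    simp only [Category.assoc] at hL4 ⊢; exact hL4
  refine ⟨⟨Δ' ≫ (a ⊗ₘ b), ⟨⟨e0, e3⟩, e1, e2⟩, ?_⟩, ⟨e0, e3⟩, e1, e2⟩
  rintro γ ⟨⟨-, hcm⟩, h1, h2⟩
  calc γ = γ ≫ (((Δ ▷ R) ≫ (α_ C C R).hom ≫ (C ◁ δ) ≫ (C ◁ (r ▷ R)) ≫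
      (C ◁ (α_ R C R).hom) ≫ (α_ C R (C ⊗ R)).inv) ≫
        (ξ ⊗ₘ ((ε ▷ R) ≫ (λ_ R).hom))) := by rw [hcu2, Category.comp_id]
    _ = (γ ≫ ((Δ ▷ R) ≫ (α_ C C R).hom ≫ (C ◁ δ) ≫ (C ◁ (r ▷ R)) ≫
        (C ◁ (α_ R C R).hom) ≫ (α_ C R (C ⊗ R)).inv)) ≫
          (ξ ⊗ₘ ((ε ▷ R) ≫ (λ_ R).hom)) := by simp only [Category.assoc]
    _ = (Δ' ≫ (γ ⊗ₘ γ)) ≫ (ξ ⊗ₘ ((ε ▷ R) ≫ (λ_ R).hom)) := by rw [hcm]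
    _ = Δ' ≫ ((γ ≫ ξ) ⊗ₘ (γ ≫ (ε ▷ R) ≫ (λ_ R).hom)) := by
        rw [Category.assoc, tensorHom_comp_tensorHom]
    _ = Δ' ≫ (a ⊗ₘ b) := by rw [h1, h2]
end

section
/- Let (A,μ,η) be a monoid in M and let (T,𝔱,ζ,ν) be right wreath data over A. Then T⊗A is a monoid in M with multiplication μ' = (T⊗μ)∘(ν⊗A)∘(T⊗𝔱⊗A) : (T⊗A)⊗(T⊗A) → T⊗A and unit η' = ζ∘η : 𝟙 → T⊗A. Moreover, with this monoid structure the morphism ζ : A → T⊗A is a morphism of monoids from (A,μ,η) to (T⊗A, μ', η'). -/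
open CategoryTheory MonoidalCategory

set_option maxHeartbeats 4000000 in
/-- Proposition 1.14 (wreath product): given a monoid `(A, μ, η)` and right wreath data
`(T, t, ζ, ν)` over `A`, the object `T ⊗ A` is a monoid with multiplication
`(T ⊗ μ) ∘ (ν ⊗ A) ∘ (T ⊗ t ⊗ A)` and unit `ζ ∘ η`, and `ζ : A ⟶ T ⊗ A` is a morphism
of monoids. -/
theorem stmt_8 {M : Type*} [Category M] [MonoidalCategory M]
    (A T : M) (μ : A ⊗ A ⟶ A) (η : 𝟙_ M ⟶ A)
    (hassoc : (μ ▷ A) ≫ μ = (α_ A A A).hom ≫ (A ◁ μ) ≫ μ)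
    (hunit_l : (η ▷ A) ≫ μ = (λ_ A).hom)
    (hunit_r : (A ◁ η) ≫ μ = (ρ_ A).hom)
    (t : A ⊗ T ⟶ T ⊗ A)
    (ht1 : (μ ▷ T) ≫ t =
      (α_ A A T).hom ≫ (A ◁ t) ≫ (α_ A T A).inv ≫ (t ▷ A) ≫ (α_ T A A).hom ≫ (T ◁ μ))
    (ht2 : (η ▷ T) ≫ t = (λ_ T).hom ≫ (ρ_ T).inv ≫ (T ◁ η))
    (ζ : A ⟶ T ⊗ A) (ν : (T ⊗ T) ⊗ A ⟶ T ⊗ A)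
    -- right A-linearity of ζ and ν
    (hrζ : μ ≫ ζ = (ζ ▷ A) ≫ (α_ T A A).hom ≫ (T ◁ μ))
    (hrν : ((T ⊗ T) ◁ μ) ≫ ν = (α_ (T ⊗ T) A A).inv ≫ (ν ▷ A) ≫ (α_ T A A).hom ≫ (T ◁ μ))
    -- left A-linearity of ζ and ν
    (hlζ : μ ≫ ζ = (A ◁ ζ) ≫ (α_ A T A).inv ≫ (t ▷ A) ≫ (α_ T A A).hom ≫ (T ◁ μ))
    (hlν : (α_ A (T ⊗ T) A).inv ≫
        (((α_ A T T).inv ≫ (t ▷ T) ≫ (α_ T A T).hom ≫ (T ◁ t) ≫ (α_ T T A).inv) ▷ A) ≫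
        (α_ (T ⊗ T) A A).hom ≫ ((T ⊗ T) ◁ μ) ≫ ν =
      (A ◁ ν) ≫ (α_ A T A).inv ≫ (t ▷ A) ≫ (α_ T A A).hom ≫ (T ◁ μ))
    -- unit law, compatibility, associativity of the wreath data
    (hu : (T ◁ ζ) ≫ (α_ T T A).inv ≫ ν = 𝟙 (T ⊗ A))
    (hcomp : (ζ ▷ T) ≫ (α_ T A T).hom ≫ (T ◁ t) ≫ (α_ T T A).inv ≫ ν = t)
    (hass : (ν ▷ T) ≫ (α_ T A T).hom ≫ (T ◁ t) ≫ (α_ T T A).inv ≫ ν =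
      (α_ (T ⊗ T) A T).hom ≫ ((T ⊗ T) ◁ t) ≫ (α_ T T (T ⊗ A)).hom ≫
        (T ◁ (α_ T T A).inv) ≫ (T ◁ ν) ≫ (α_ T T A).inv ≫ ν) :
    ∀ m2 : (T ⊗ A) ⊗ (T ⊗ A) ⟶ T ⊗ A,
      m2 = (α_ (T ⊗ A) T A).inv ≫
          (((α_ T A T).hom ≫ (T ◁ t) ≫ (α_ T T A).inv) ▷ A) ≫
          (ν ▷ A) ≫ (α_ T A A).hom ≫ (T ◁ μ) →
      -- T ⊗ A is a monoid
      (((η ≫ ζ) ▷ (T ⊗ A)) ≫ m2 = (λ_ (T ⊗ A)).hom ∧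
       ((T ⊗ A) ◁ (η ≫ ζ)) ≫ m2 = (ρ_ (T ⊗ A)).hom ∧
       (m2 ▷ (T ⊗ A)) ≫ m2 = (α_ (T ⊗ A) (T ⊗ A) (T ⊗ A)).hom ≫ ((T ⊗ A) ◁ m2) ≫ m2) ∧
      -- ζ is a morphism of monoids
      (η ≫ ζ = η ≫ ζ ∧ μ ≫ ζ = (ζ ⊗ₘ ζ) ≫ m2) := by
  intro m2 hm2
  subst hm2
  refine ⟨⟨?_, ?_, ?_⟩, rfl, ?_⟩
  · -- left unit law
    calc ((η ≫ ζ) ▷ (T ⊗ A)) ≫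
        ((α_ (T ⊗ A) T A).inv ≫
          (((α_ T A T).hom ≫ (T ◁ t) ≫ (α_ T T A).inv) ▷ A) ≫
          (ν ▷ A) ≫ (α_ T A A).hom ≫ (T ◁ μ))
        = 𝟙 (𝟙_ M ⊗ (T ⊗ A)) ⊗≫ (η ▷ (T ⊗ A)) ⊗≫
            (((ζ ▷ T) ≫ (α_ T A T).hom ≫ (T ◁ t) ≫ (α_ T T A).inv ≫ ν) ▷ A) ⊗≫
            (T ◁ μ) := by monoidal
      _ = 𝟙 (𝟙_ M ⊗ (T ⊗ A)) ⊗≫ (((η ▷ T) ≫ t) ▷ A) ⊗≫ (T ◁ μ) := by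
            conv_lhs => rw [hcomp]
            monoidal
      _ = 𝟙 (𝟙_ M ⊗ (T ⊗ A)) ⊗≫ (T ◁ ((η ▷ A) ≫ μ)) := by
            conv_lhs => rw [ht2]
            monoidal
      _ = (λ_ (T ⊗ A)).hom := by
            conv_lhs => rw [hunit_l]
            monoidal
  · -- right unit law
    calc ((T ⊗ A) ◁ (η ≫ ζ)) ≫
        ((α_ (T ⊗ A) T A).inv ≫
          (((α_ T A T).hom ≫ (T ◁ t) ≫ (α_ T T A).inv) ▷ A) ≫
          (ν ▷ A) ≫ (α_ T A A).hom ≫ (T ◁ μ))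
        = 𝟙 ((T ⊗ A) ⊗ 𝟙_ M) ⊗≫ ((T ⊗ A) ◁ η) ⊗≫ ((T ⊗ A) ◁ ζ) ⊗≫ (T ◁ (t ▷ A)) ⊗≫
            ((α_ (T ⊗ T) A A).inv ≫ (ν ▷ A) ≫ (α_ T A A).hom ≫ (T ◁ μ)) := by monoidal
      _ = 𝟙 ((T ⊗ A) ⊗ 𝟙_ M) ⊗≫ (T ◁ (A ◁ η)) ⊗≫
            (T ◁ ((A ◁ ζ) ≫ (α_ A T A).inv ≫ (t ▷ A) ≫ (α_ T A A).hom ≫ (T ◁ μ))) ⊗≫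
            ((α_ T T A).inv ≫ ν) := by
            conv_lhs => rw [← hrν]
            monoidal
      _ = 𝟙 ((T ⊗ A) ⊗ 𝟙_ M) ⊗≫ (T ◁ ((A ◁ η) ≫ μ)) ⊗≫ (T ◁ ζ) ⊗≫
            ((α_ T T A).inv ≫ ν) := by
            conv_lhs => rw [← hlζ]
            monoidal
      _ = 𝟙 ((T ⊗ A) ⊗ 𝟙_ M) ⊗≫ ((T ◁ ζ) ≫ (α_ T T A).inv ≫ ν) := by
            conv_lhs => rw [hunit_r]
            monoidal
      _ = (ρ_ (T ⊗ A)).hom := by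
            conv_lhs => rw [hu]
            monoidal
  · -- associativity
    calc (((α_ (T ⊗ A) T A).inv ≫
          (((α_ T A T).hom ≫ (T ◁ t) ≫ (α_ T T A).inv) ▷ A) ≫
          (ν ▷ A) ≫ (α_ T A A).hom ≫ (T ◁ μ)) ▷ (T ⊗ A)) ≫
        ((α_ (T ⊗ A) T A).inv ≫
          (((α_ T A T).hom ≫ (T ◁ t) ≫ (α_ T T A).inv) ▷ A) ≫
          (ν ▷ A) ≫ (α_ T A A).hom ≫ (T ◁ μ))
        = 𝟙 (((T ⊗ A) ⊗ (T ⊗ A)) ⊗ (T ⊗ A)) ⊗≫ (T ◁ (t ▷ (A ⊗ (T ⊗ A)))) ⊗≫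
            (ν ▷ (A ⊗ (T ⊗ A))) ⊗≫ (T ◁ (((μ ▷ T) ≫ t) ▷ A)) ⊗≫
            (ν ▷ A) ⊗≫ (T ◁ μ) := by monoidal
      _ = 𝟙 (((T ⊗ A) ⊗ (T ⊗ A)) ⊗ (T ⊗ A)) ⊗≫ (T ◁ (t ▷ (A ⊗ (T ⊗ A)))) ⊗≫
            (ν ▷ (A ⊗ (T ⊗ A))) ⊗≫ ((T ⊗ A) ◁ (t ▷ A)) ⊗≫ (T ◁ (t ▷ (A ⊗ A))) ⊗≫
            ((((T ⊗ T) ◁ μ) ≫ ν) ▷ A) ⊗≫ (T ◁ μ) := by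
            conv_lhs => rw [ht1]
            monoidal
      _ = 𝟙 (((T ⊗ A) ⊗ (T ⊗ A)) ⊗ (T ⊗ A)) ⊗≫ (T ◁ (t ▷ (A ⊗ (T ⊗ A)))) ⊗≫
            ((ν ▷ ((A ⊗ T) ⊗ A)) ≫ ((T ⊗ A) ◁ (t ▷ A))) ⊗≫ (T ◁ (t ▷ (A ⊗ A))) ⊗≫
            (ν ▷ (A ⊗ A)) ⊗≫ (T ◁ (μ ▷ A)) ⊗≫ (T ◁ μ) := by
            conv_lhs => rw [hrν]
            monoidal
      _ = 𝟙 (((T ⊗ A) ⊗ (T ⊗ A)) ⊗ (T ⊗ A)) ⊗≫ (T ◁ (t ▷ (A ⊗ (T ⊗ A)))) ⊗≫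
            (((T ⊗ T) ⊗ A) ◁ (t ▷ A)) ⊗≫
            (((ν ▷ T) ≫ (α_ T A T).hom ≫ (T ◁ t) ≫ (α_ T T A).inv ≫ ν) ▷ (A ⊗ A)) ⊗≫
            (T ◁ (μ ▷ A)) ⊗≫ (T ◁ μ) := by
            conv_lhs => rw [← whisker_exchange]
            monoidal
      _ = 𝟙 (((T ⊗ A) ⊗ (T ⊗ A)) ⊗ (T ⊗ A)) ⊗≫
            (((T ◁ t) ▷ ((A ⊗ T) ⊗ A)) ≫ ((T ⊗ (T ⊗ A)) ◁ (t ▷ A))) ⊗≫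
            ((T ⊗ T) ◁ (t ▷ (A ⊗ A))) ⊗≫ (T ◁ (ν ▷ (A ⊗ A))) ⊗≫ (ν ▷ (A ⊗ A)) ⊗≫
            (T ◁ (μ ▷ A)) ⊗≫ (T ◁ μ) := by
            conv_lhs => rw [hass]
            monoidal
      _ = 𝟙 (((T ⊗ A) ⊗ (T ⊗ A)) ⊗ (T ⊗ A)) ⊗≫ ((T ⊗ (A ⊗ T)) ◁ (t ▷ A)) ⊗≫
            (T ◁ (t ▷ (T ⊗ (A ⊗ A)))) ⊗≫ ((T ⊗ T) ◁ (t ▷ (A ⊗ A))) ⊗≫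
            (T ◁ (ν ▷ (A ⊗ A))) ⊗≫
            (((α_ (T ⊗ T) A A).inv ≫ (ν ▷ A) ≫ (α_ T A A).hom ≫ (T ◁ μ)) ▷ A) ⊗≫
            (T ◁ μ) := by
            conv_lhs => rw [← whisker_exchange]
            monoidal
      _ = 𝟙 (((T ⊗ A) ⊗ (T ⊗ A)) ⊗ (T ⊗ A)) ⊗≫ ((T ⊗ (A ⊗ T)) ◁ (t ▷ A)) ⊗≫
            (T ◁ (t ▷ (T ⊗ (A ⊗ A)))) ⊗≫ ((T ⊗ T) ◁ (t ▷ (A ⊗ A))) ⊗≫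
            (T ◁ (((α_ (T ⊗ T) A A).inv ≫ (ν ▷ A) ≫ (α_ T A A).hom ≫ (T ◁ μ)) ▷ A)) ⊗≫
            (ν ▷ A) ⊗≫ (T ◁ μ) := by
            conv_lhs => rw [← hrν]
            monoidal
      _ = 𝟙 (((T ⊗ A) ⊗ (T ⊗ A)) ⊗ (T ⊗ A)) ⊗≫ ((T ⊗ (A ⊗ T)) ◁ (t ▷ A)) ⊗≫
            (T ◁ (((α_ A (T ⊗ T) A).inv ≫
              (((α_ A T T).inv ≫ (t ▷ T) ≫ (α_ T A T).hom ≫ (T ◁ t) ≫ (α_ T T A).inv) ▷ A) ≫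
              (α_ (T ⊗ T) A A).hom ≫ ((T ⊗ T) ◁ μ) ≫ ν) ▷ A)) ⊗≫
            (ν ▷ A) ⊗≫ (T ◁ μ) := by
            conv_lhs => rw [← hrν]
            monoidal
      _ = 𝟙 (((T ⊗ A) ⊗ (T ⊗ A)) ⊗ (T ⊗ A)) ⊗≫ ((T ⊗ (A ⊗ T)) ◁ (t ▷ A)) ⊗≫
            ((T ⊗ A) ◁ (ν ▷ A)) ⊗≫ (T ◁ (t ▷ (A ⊗ A))) ⊗≫
            ((((T ⊗ T) ◁ μ) ≫ ν) ▷ A) ⊗≫ (T ◁ μ) := by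
            conv_lhs => rw [hlν]
            monoidal
      _ = 𝟙 (((T ⊗ A) ⊗ (T ⊗ A)) ⊗ (T ⊗ A)) ⊗≫ ((T ⊗ (A ⊗ T)) ◁ (t ▷ A)) ⊗≫
            ((T ⊗ A) ◁ (ν ▷ A)) ⊗≫ (T ◁ (t ▷ (A ⊗ A))) ⊗≫
            (ν ▷ (A ⊗ A)) ⊗≫ (T ◁ ((μ ▷ A) ≫ μ)) := by
            conv_lhs => rw [hrν]
            monoidal
      _ = 𝟙 (((T ⊗ A) ⊗ (T ⊗ A)) ⊗ (T ⊗ A)) ⊗≫ ((T ⊗ (A ⊗ T)) ◁ (t ▷ A)) ⊗≫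
            ((T ⊗ A) ◁ (ν ▷ A)) ⊗≫ (T ◁ (t ▷ (A ⊗ A))) ⊗≫
            ((ν ▷ (A ⊗ A)) ≫ ((T ⊗ A) ◁ μ)) ⊗≫ (T ◁ μ) := by
            conv_lhs => rw [hassoc]
            monoidal
      _ = 𝟙 (((T ⊗ A) ⊗ (T ⊗ A)) ⊗ (T ⊗ A)) ⊗≫ ((T ⊗ (A ⊗ T)) ◁ (t ▷ A)) ⊗≫
            ((T ⊗ A) ◁ (ν ▷ A)) ⊗≫
            (((T ◁ t) ▷ (A ⊗ A)) ≫ ((T ⊗ (T ⊗ A)) ◁ μ)) ⊗≫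
            (ν ▷ A) ⊗≫ (T ◁ μ) := by
            conv_lhs => rw [← whisker_exchange]
            monoidal
      _ = (α_ (T ⊗ A) (T ⊗ A) (T ⊗ A)).hom ≫
          ((T ⊗ A) ◁ ((α_ (T ⊗ A) T A).inv ≫
            (((α_ T A T).hom ≫ (T ◁ t) ≫ (α_ T T A).inv) ▷ A) ≫
            (ν ▷ A) ≫ (α_ T A A).hom ≫ (T ◁ μ))) ≫
          ((α_ (T ⊗ A) T A).inv ≫
            (((α_ T A T).hom ≫ (T ◁ t) ≫ (α_ T T A).inv) ▷ A) ≫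
            (ν ▷ A) ≫ (α_ T A A).hom ≫ (T ◁ μ)) := by
            conv_lhs => rw [← whisker_exchange]
            monoidal
  · -- ζ is a morphism of monoids (multiplicativity)
    symm
    calc (ζ ⊗ₘ ζ) ≫
        ((α_ (T ⊗ A) T A).inv ≫
          (((α_ T A T).hom ≫ (T ◁ t) ≫ (α_ T T A).inv) ▷ A) ≫
          (ν ▷ A) ≫ (α_ T A A).hom ≫ (T ◁ μ))
        = ((ζ ▷ A) ≫ ((T ⊗ A) ◁ ζ)) ≫
          ((α_ (T ⊗ A) T A).inv ≫
          (((α_ T A T).hom ≫ (T ◁ t) ≫ (α_ T T A).inv) ▷ A) ≫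
          (ν ▷ A) ≫ (α_ T A A).hom ≫ (T ◁ μ)) := by rw [MonoidalCategory.tensorHom_def]
      _ = ((A ◁ ζ) ≫ (ζ ▷ (T ⊗ A))) ≫
          ((α_ (T ⊗ A) T A).inv ≫
          (((α_ T A T).hom ≫ (T ◁ t) ≫ (α_ T T A).inv) ▷ A) ≫
          (ν ▷ A) ≫ (α_ T A A).hom ≫ (T ◁ μ)) := by rw [← whisker_exchange]
      _ = 𝟙 (A ⊗ A) ⊗≫ (A ◁ ζ) ⊗≫
            (((ζ ▷ T) ≫ (α_ T A T).hom ≫ (T ◁ t) ≫ (α_ T T A).inv ≫ ν) ▷ A) ⊗≫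
            (T ◁ μ) := by monoidal
      _ = 𝟙 (A ⊗ A) ⊗≫
            ((A ◁ ζ) ≫ (α_ A T A).inv ≫ (t ▷ A) ≫ (α_ T A A).hom ≫ (T ◁ μ)) := by
            conv_lhs => rw [hcomp]
            monoidal
      _ = μ ≫ ζ := by
            conv_lhs => rw [← hlζ]
            monoidal
end

section
/- Let (A,μ,η) be a monoid in M, let (T,𝔱,ζ,ν) be right wreath data over A, and let (T⊗A, μ'', η'') be the associated wreath-product monoid, where μ'' = (T⊗μ)∘(ν⊗A)∘(T⊗𝔱⊗A) and η'' = ζ∘η. Let (L,μ',η') be a monoid, let φ : A → L be a morphism of monoids, and let ψ : T → L be a morphism satisfying (ψ⊗A)∘ζ = η'⊗A (as morphisms A → L⊗A, using the left unitor) and (ψ⊗A)∘ν = (μ'⊗A)∘(ψ⊗ψ⊗A). If moreover μ'∘(φ⊗ψ) = μ'∘(ψ⊗φ)∘𝔱 (as morphisms A⊗T → L), then there exists a unique morphism of monoids φ̂ : T⊗A → L such that φ̂∘ζ = φ and φ̂∘(T⊗η) = ψ (the latter as morphisms T → L, using the right unitor). -/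
open CategoryTheory MonoidalCategory

set_option maxHeartbeats 2000000 in
/-- Proposition 1.16 (universal property of the wreath product): given a monoid `(A, μ, η)`,
right wreath data `(T, t, ζ, ν)` over `A` with wreath product monoid `(T ⊗ A, μ'', ζ ∘ η)`,
a monoid `(L, μ', η')`, a monoid morphism `f : A ⟶ L`, and a morphism `g : T ⟶ L`
satisfying the stated conditions, there is a unique monoid morphism `φ̂ : T ⊗ A ⟶ L` with
`φ̂ ∘ ζ = f` and `φ̂ ∘ (T ⊗ η) = g`. -/
theorem stmt_9 {M : Type*} [Category M] [MonoidalCategory M]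
    (A T : M) (μ : A ⊗ A ⟶ A) (η : 𝟙_ M ⟶ A)
    (hassoc : (μ ▷ A) ≫ μ = (α_ A A A).hom ≫ (A ◁ μ) ≫ μ)
    (hunit_l : (η ▷ A) ≫ μ = (λ_ A).hom)
    (hunit_r : (A ◁ η) ≫ μ = (ρ_ A).hom)
    (t : A ⊗ T ⟶ T ⊗ A)
    (ht1 : (μ ▷ T) ≫ t =
      (α_ A A T).hom ≫ (A ◁ t) ≫ (α_ A T A).inv ≫ (t ▷ A) ≫ (α_ T A A).hom ≫ (T ◁ μ))
    (ht2 : (η ▷ T) ≫ t = (λ_ T).hom ≫ (ρ_ T).inv ≫ (T ◁ η))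
    (ζ : A ⟶ T ⊗ A) (ν : (T ⊗ T) ⊗ A ⟶ T ⊗ A)
    (hrζ : μ ≫ ζ = (ζ ▷ A) ≫ (α_ T A A).hom ≫ (T ◁ μ))
    (hrν : ((T ⊗ T) ◁ μ) ≫ ν = (α_ (T ⊗ T) A A).inv ≫ (ν ▷ A) ≫ (α_ T A A).hom ≫ (T ◁ μ))
    (hlζ : μ ≫ ζ = (A ◁ ζ) ≫ (α_ A T A).inv ≫ (t ▷ A) ≫ (α_ T A A).hom ≫ (T ◁ μ))
    (hlν : (α_ A (T ⊗ T) A).inv ≫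
        (((α_ A T T).inv ≫ (t ▷ T) ≫ (α_ T A T).hom ≫ (T ◁ t) ≫ (α_ T T A).inv) ▷ A) ≫
        (α_ (T ⊗ T) A A).hom ≫ ((T ⊗ T) ◁ μ) ≫ ν =
      (A ◁ ν) ≫ (α_ A T A).inv ≫ (t ▷ A) ≫ (α_ T A A).hom ≫ (T ◁ μ))
    (hu : (T ◁ ζ) ≫ (α_ T T A).inv ≫ ν = 𝟙 (T ⊗ A))
    (hcomp : (ζ ▷ T) ≫ (α_ T A T).hom ≫ (T ◁ t) ≫ (α_ T T A).inv ≫ ν = t)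
    (hass : (ν ▷ T) ≫ (α_ T A T).hom ≫ (T ◁ t) ≫ (α_ T T A).inv ≫ ν =
      (α_ (T ⊗ T) A T).hom ≫ ((T ⊗ T) ◁ t) ≫ (α_ T T (T ⊗ A)).hom ≫
        (T ◁ (α_ T T A).inv) ≫ (T ◁ ν) ≫ (α_ T T A).inv ≫ ν)
    -- the monoid (L, μ', η')
    (L : M) (μ' : L ⊗ L ⟶ L) (η' : 𝟙_ M ⟶ L)
    (hassoc' : (μ' ▷ L) ≫ μ' = (α_ L L L).hom ≫ (L ◁ μ') ≫ μ')
    (hunit_l' : (η' ▷ L) ≫ μ' = (λ_ L).hom)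
    (hunit_r' : (L ◁ η') ≫ μ' = (ρ_ L).hom)
    -- a monoid morphism f : A ⟶ L
    (f : A ⟶ L) (hf1 : η ≫ f = η') (hf2 : μ ≫ f = (f ⊗ₘ f) ≫ μ')
    -- a morphism g : T ⟶ L with the stated properties
    (g : T ⟶ L)
    (hg1 : ζ ≫ (g ▷ A) = (λ_ A).inv ≫ (η' ▷ A))
    (hg2 : ν ≫ (g ▷ A) = ((g ⊗ₘ g) ▷ A) ≫ (μ' ▷ A))
    (hfg : (f ⊗ₘ g) ≫ μ' = t ≫ (g ⊗ₘ f) ≫ μ') :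
    ∀ m2 : (T ⊗ A) ⊗ (T ⊗ A) ⟶ T ⊗ A,
      m2 = (α_ (T ⊗ A) T A).inv ≫
          (((α_ T A T).hom ≫ (T ◁ t) ≫ (α_ T T A).inv) ▷ A) ≫
          (ν ▷ A) ≫ (α_ T A A).hom ≫ (T ◁ μ) →
      ∃! φ : T ⊗ A ⟶ L,
        ((η ≫ ζ) ≫ φ = η' ∧ m2 ≫ φ = (φ ⊗ₘ φ) ≫ μ') ∧
        ζ ≫ φ = f ∧ (ρ_ T).inv ≫ (T ◁ η) ≫ φ = g := by

  intro m2 hm2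
  -- derived associativity forms for μ'
  have hassoc'' : (L ◁ μ') ≫ μ' = (α_ L L L).inv ≫ (μ' ▷ L) ≫ μ' := by
    rw [hassoc']; simp
  have hassoc3 : (L ◁ (μ' ▷ L)) ≫ (α_ L L L).inv ≫ (μ' ▷ L) ≫ μ' =
      (α_ L (L ⊗ L) L).inv ≫ ((α_ L L L).inv ▷ L) ≫ ((μ' ▷ L) ▷ L) ≫ (μ' ▷ L) ≫ μ' := by
    calc (L ◁ (μ' ▷ L)) ≫ (α_ L L L).inv ≫ (μ' ▷ L) ≫ μ'
        = (α_ L (L ⊗ L) L).inv ≫ ((L ◁ μ') ▷ L) ≫ (μ' ▷ L) ≫ μ' := by monoidal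
      _ = (α_ L (L ⊗ L) L).inv ≫ (((L ◁ μ') ≫ μ') ▷ L) ≫ μ' := by
            rw [MonoidalCategory.comp_whiskerRight]; simp
      _ = _ := by rw [hassoc'']; simp [MonoidalCategory.comp_whiskerRight]
  have hζφ : ζ ≫ ((g ⊗ₘ f) ≫ μ') = f := by
    rw [MonoidalCategory.tensorHom_def]
    slice_lhs 1 2 => rw [hg1]
    slice_lhs 2 3 => rw [← whisker_exchange]
    slice_lhs 3 4 => rw [hunit_l']
    slice_lhs 2 3 => rw [leftUnitor_naturality]
    simp
  have hρφ : (ρ_ T).inv ≫ (T ◁ η) ≫ ((g ⊗ₘ f) ≫ μ') = g := by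
    rw [MonoidalCategory.tensorHom_def]
    slice_lhs 2 3 => rw [whisker_exchange]
    slice_lhs 3 4 => rw [← MonoidalCategory.whiskerLeft_comp, hf1]
    slice_lhs 3 4 => rw [hunit_r']
    slice_lhs 2 3 => rw [rightUnitor_naturality]
    simp
  -- claim A-1
  have hA1 : m2 ≫ ((g ⊗ₘ f) ≫ μ') =
      (α_ (T ⊗ A) T A).inv ≫ ((α_ T A T).hom ▷ A) ≫ ((T ◁ t) ▷ A) ≫
        ((g ▷ (T ⊗ A)) ▷ A) ≫ ((L ◁ (g ▷ A)) ▷ A) ≫ ((L ◁ (L ◁ f)) ▷ A) ≫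
        ((L ⊗ (L ⊗ L)) ◁ f) ≫ ((α_ L L L).inv ▷ L) ≫ ((μ' ▷ L) ▷ L) ≫ (μ' ▷ L) ≫ μ' := by
    rw [hm2]
    simp only [MonoidalCategory.tensorHom_def, MonoidalCategory.comp_whiskerRight,
      MonoidalCategory.whiskerLeft_comp, Category.assoc]
    rw [whisker_exchange_assoc]
    rw [← MonoidalCategory.whiskerLeft_comp_assoc, hf2]
    simp only [MonoidalCategory.tensorHom_def, MonoidalCategory.whiskerLeft_comp, Category.assoc]
    rw [← associator_naturality_left_assoc]
    slice_lhs 5 6 => rw [← MonoidalCategory.comp_whiskerRight, hg2]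
    simp only [MonoidalCategory.tensorHom_def, MonoidalCategory.comp_whiskerRight, Category.assoc]
    rw [associator_naturality_left_assoc]
    rw [← whisker_exchange_assoc, ← whisker_exchange_assoc]
    rw [hassoc'']
    monoidal
  -- claim A-2
  have hA2 : (α_ (T ⊗ A) T A).inv ≫ ((α_ T A T).hom ▷ A) ≫ (α_ T (A ⊗ T) A).hom ≫
        (T ◁ ((t ≫ (g ⊗ₘ f) ≫ μ') ▷ A)) ≫ (T ◁ (L ◁ f)) ≫ (T ◁ μ') ≫ (g ▷ L) ≫ μ' =
      (α_ (T ⊗ A) T A).inv ≫ ((α_ T A T).hom ▷ A) ≫ ((T ◁ t) ▷ A) ≫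
        ((g ▷ (T ⊗ A)) ▷ A) ≫ ((L ◁ (g ▷ A)) ▷ A) ≫ ((L ◁ (L ◁ f)) ▷ A) ≫
        ((L ⊗ (L ⊗ L)) ◁ f) ≫ ((α_ L L L).inv ▷ L) ≫ ((μ' ▷ L) ▷ L) ≫ (μ' ▷ L) ≫ μ' := by
    simp only [MonoidalCategory.tensorHom_def, MonoidalCategory.comp_whiskerRight,
      MonoidalCategory.whiskerLeft_comp, Category.assoc]
    rw [whisker_exchange_assoc, whisker_exchange_assoc, whisker_exchange_assoc,
      whisker_exchange_assoc, whisker_exchange_assoc]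
    slice_lhs 8 9 => rw [← MonoidalCategory.whiskerLeft_comp, ← whisker_exchange,
      MonoidalCategory.whiskerLeft_comp]
    simp only [Category.assoc]
    rw [hassoc'', hassoc3]
    monoidal
  -- claim B-2
  have hB2 : (α_ (T ⊗ A) T A).inv ≫ ((α_ T A T).hom ▷ A) ≫ (α_ T (A ⊗ T) A).hom ≫
        (T ◁ (((f ⊗ₘ g) ≫ μ') ▷ A)) ≫ (T ◁ (L ◁ f)) ≫ (T ◁ μ') ≫ (g ▷ L) ≫ μ' =
      (α_ (T ⊗ A) T A).inv ≫ (((g ▷ A) ▷ T) ▷ A) ≫ (((L ◁ f) ▷ T) ▷ A) ≫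
        (((L ⊗ L) ◁ g) ▷ A) ≫ (((L ⊗ L) ⊗ L) ◁ f) ≫ ((μ' ▷ L) ▷ L) ≫ (μ' ▷ L) ≫ μ' := by
    simp only [MonoidalCategory.tensorHom_def, MonoidalCategory.comp_whiskerRight,
      MonoidalCategory.whiskerLeft_comp, Category.assoc]
    rw [whisker_exchange_assoc, whisker_exchange_assoc, whisker_exchange_assoc,
      whisker_exchange_assoc, whisker_exchange_assoc]
    slice_lhs 7 8 => rw [← MonoidalCategory.whiskerLeft_comp, ← whisker_exchange,
      MonoidalCategory.whiskerLeft_comp]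
    simp only [Category.assoc]
    rw [hassoc'', hassoc3]
    monoidal
  -- claim B-1
  have hB1 : (((g ⊗ₘ f) ≫ μ') ⊗ₘ ((g ⊗ₘ f) ≫ μ')) ≫ μ' =
      (α_ (T ⊗ A) T A).inv ≫ (((g ▷ A) ▷ T) ▷ A) ≫ (((L ◁ f) ▷ T) ▷ A) ≫
        (((L ⊗ L) ◁ g) ▷ A) ≫ (((L ⊗ L) ⊗ L) ◁ f) ≫ ((μ' ▷ L) ▷ L) ≫ (μ' ▷ L) ≫ μ' := by
    rw [← tensorHom_comp_tensorHom]
    simp only [MonoidalCategory.tensorHom_def, MonoidalCategory.comp_whiskerRight,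
      MonoidalCategory.whiskerLeft_comp, Category.assoc]
    rw [hassoc'']
    monoidal
  have hmul : m2 ≫ ((g ⊗ₘ f) ≫ μ') = (((g ⊗ₘ f) ≫ μ') ⊗ₘ ((g ⊗ₘ f) ≫ μ')) ≫ μ' := by
    calc m2 ≫ ((g ⊗ₘ f) ≫ μ')
        = (α_ (T ⊗ A) T A).inv ≫ ((α_ T A T).hom ▷ A) ≫ ((T ◁ t) ▷ A) ≫
            ((g ▷ (T ⊗ A)) ▷ A) ≫ ((L ◁ (g ▷ A)) ▷ A) ≫ ((L ◁ (L ◁ f)) ▷ A) ≫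
            ((L ⊗ (L ⊗ L)) ◁ f) ≫ ((α_ L L L).inv ▷ L) ≫ ((μ' ▷ L) ▷ L) ≫ (μ' ▷ L) ≫ μ' := hA1
      _ = (α_ (T ⊗ A) T A).inv ≫ ((α_ T A T).hom ▷ A) ≫ (α_ T (A ⊗ T) A).hom ≫
            (T ◁ ((t ≫ (g ⊗ₘ f) ≫ μ') ▷ A)) ≫ (T ◁ (L ◁ f)) ≫ (T ◁ μ') ≫ (g ▷ L) ≫ μ' := hA2.symm
      _ = (α_ (T ⊗ A) T A).inv ≫ ((α_ T A T).hom ▷ A) ≫ (α_ T (A ⊗ T) A).hom ≫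
            (T ◁ (((f ⊗ₘ g) ≫ μ') ▷ A)) ≫ (T ◁ (L ◁ f)) ≫ (T ◁ μ') ≫ (g ▷ L) ≫ μ' := by
          rw [hfg]
      _ = (α_ (T ⊗ A) T A).inv ≫ (((g ▷ A) ▷ T) ▷ A) ≫ (((L ◁ f) ▷ T) ▷ A) ≫
            (((L ⊗ L) ◁ g) ▷ A) ≫ (((L ⊗ L) ⊗ L) ◁ f) ≫ ((μ' ▷ L) ▷ L) ≫ (μ' ▷ L) ≫ μ' := hB2
      _ = (((g ⊗ₘ f) ≫ μ') ⊗ₘ ((g ⊗ₘ f) ≫ μ')) ≫ μ' := hB1.symm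
  refine ⟨(g ⊗ₘ f) ≫ μ', ⟨⟨?_, ?_⟩, hζφ, hρφ⟩, ?_⟩
  · rw [Category.assoc, hζφ, hf1]
  · exact hmul
  · -- uniqueness
    rintro φ ⟨⟨-, hφmul⟩, hφζ, hφρ⟩
    have hQ : (((ρ_ T).inv ≫ (T ◁ η)) ▷ (T ⊗ A)) ≫ m2 = (α_ T T A).inv ≫ ν := by
      rw [hm2]
      have tail : (ν ▷ A) ≫ (α_ T A A).hom ≫ (T ◁ μ) =
          (α_ (T ⊗ T) A A).hom ≫ ((T ⊗ T) ◁ μ) ≫ ν := by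
        rw [hrν]; simp
      simp only [MonoidalCategory.comp_whiskerRight, MonoidalCategory.whiskerLeft_comp,
        Category.assoc]
      rw [tail]
      rw [associator_inv_naturality_left_assoc]
      slice_lhs 3 4 => rw [← MonoidalCategory.comp_whiskerRight, associator_naturality_middle]
      simp only [MonoidalCategory.comp_whiskerRight, Category.assoc]
      slice_lhs 4 5 => rw [← MonoidalCategory.comp_whiskerRight,
        ← MonoidalCategory.whiskerLeft_comp, ht2]
      simp only [MonoidalCategory.comp_whiskerRight, MonoidalCategory.whiskerLeft_comp,
        Category.assoc]
      have step3 : (T ◁ T ◁ η) ▷ A ≫ (α_ T T A).inv ▷ A ≫ (α_ (T ⊗ T) A A).hom =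
          (α_ T T (𝟙_ M)).inv ▷ A ≫ (α_ (T ⊗ T) (𝟙_ M) A).hom ≫ ((T ⊗ T) ◁ (η ▷ A)) := by
        monoidal
      slice_lhs 6 8 => rw [step3]
      simp only [Category.assoc]
      slice_lhs 8 9 => rw [← MonoidalCategory.whiskerLeft_comp, hunit_l]
      monoidal
    have hid : ((((ρ_ T).inv ≫ (T ◁ η)) ⊗ₘ ζ)) ≫ m2 = 𝟙 (T ⊗ A) := by
      rw [tensorHom_def', Category.assoc, hQ]
      rw [← Category.assoc, ← hu]
      simp
    calc φ = (((((ρ_ T).inv ≫ (T ◁ η)) ⊗ₘ ζ)) ≫ m2) ≫ φ := by rw [hid]; simp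
      _ = ((((ρ_ T).inv ≫ (T ◁ η)) ⊗ₘ ζ)) ≫ (φ ⊗ₘ φ) ≫ μ' := by
          rw [Category.assoc, hφmul]
      _ = (((((ρ_ T).inv ≫ (T ◁ η)) ≫ φ) ⊗ₘ (ζ ≫ φ))) ≫ μ' := by
          rw [tensorHom_comp_tensorHom_assoc]
      _ = (g ⊗ₘ f) ≫ μ' := by
          rw [hφζ, Category.assoc, hφρ]
end

section
/- Let B be an object of M carrying both a monoid structure (B,μ,η) and a comonoid structure (B,Δ,ε), and let ħ : B⊗B → B⊗B be a double distributive law between them. Then B⊗B is a comonoid in M with comultiplication (B⊗ħ⊗B)∘(Δ⊗Δ) : B⊗B → (B⊗B)⊗(B⊗B) and counit ε⊗ε : B⊗B → 𝟙. -/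
open CategoryTheory MonoidalCategory

set_option maxHeartbeats 8000000

/-- Given an object `B` with a monoid structure `(μ, η)` and a comonoid structure `(Δ, ε)`
together with a double distributive law `h : B ⊗ B ⟶ B ⊗ B`, the object `B ⊗ B` is a
comonoid with comultiplication `(B ⊗ h ⊗ B) ∘ (Δ ⊗ Δ)` and counit `ε ⊗ ε`. -/
theorem stmt_12 {M : Type*} [Category M] [MonoidalCategory M]
    (B : M) (μ : B ⊗ B ⟶ B) (η : 𝟙_ M ⟶ B) (Δ : B ⟶ B ⊗ B) (ε : B ⟶ 𝟙_ M)
    (hassoc : (μ ▷ B) ≫ μ = (α_ B B B).hom ≫ (B ◁ μ) ≫ μ)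
    (hunit_l : (η ▷ B) ≫ μ = (λ_ B).hom)
    (hunit_r : (B ◁ η) ≫ μ = (ρ_ B).hom)
    (hcounit_l : Δ ≫ (ε ▷ B) = (λ_ B).inv)
    (hcounit_r : Δ ≫ (B ◁ ε) = (ρ_ B).inv)
    (hcoassoc : Δ ≫ (Δ ▷ B) ≫ (α_ B B B).hom = Δ ≫ (B ◁ Δ))
    (h : B ⊗ B ⟶ B ⊗ B)
    (hA1 : (η ▷ B) ≫ h = (λ_ B).hom ≫ (ρ_ B).inv ≫ (B ◁ η))
    (hA2 : (μ ▷ B) ≫ h =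
      (α_ B B B).hom ≫ (B ◁ h) ≫ (α_ B B B).inv ≫ (h ▷ B) ≫ (α_ B B B).hom ≫ (B ◁ μ))
    (hA3 : (B ◁ η) ≫ h = (ρ_ B).hom ≫ (λ_ B).inv ≫ (η ▷ B))
    (hA4 : (B ◁ μ) ≫ h =
      (α_ B B B).inv ≫ (h ▷ B) ≫ (α_ B B B).hom ≫ (B ◁ h) ≫ (α_ B B B).inv ≫ (μ ▷ B))
    (hC1 : h ≫ (B ◁ ε) ≫ (ρ_ B).hom = (ε ▷ B) ≫ (λ_ B).hom)
    (hC2 : h ≫ (B ◁ Δ) =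
      (Δ ▷ B) ≫ (α_ B B B).hom ≫ (B ◁ h) ≫ (α_ B B B).inv ≫ (h ▷ B) ≫ (α_ B B B).hom)
    (hC3 : h ≫ (ε ▷ B) ≫ (λ_ B).hom = (B ◁ ε) ≫ (ρ_ B).hom)
    (hC4 : h ≫ (Δ ▷ B) =
      (B ◁ Δ) ≫ (α_ B B B).inv ≫ (h ▷ B) ≫ (α_ B B B).hom ≫ (B ◁ h) ≫ (α_ B B B).inv) :
    ∀ (D2 : B ⊗ B ⟶ (B ⊗ B) ⊗ (B ⊗ B)) (E2 : B ⊗ B ⟶ 𝟙_ M),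
      D2 = (Δ ⊗ₘ Δ) ≫ (α_ (B ⊗ B) B B).inv ≫ ((α_ B B B).hom ▷ B) ≫
          ((B ◁ h) ▷ B) ≫ ((α_ B B B).inv ▷ B) ≫ (α_ (B ⊗ B) B B).hom →
      E2 = (ε ⊗ₘ ε) ≫ (λ_ (𝟙_ M)).hom →
      D2 ≫ (E2 ▷ (B ⊗ B)) = (λ_ (B ⊗ B)).inv ∧
      D2 ≫ ((B ⊗ B) ◁ E2) = (ρ_ (B ⊗ B)).inv ∧
      D2 ≫ (D2 ▷ (B ⊗ B)) ≫ (α_ (B ⊗ B) (B ⊗ B) (B ⊗ B)).hom = D2 ≫ ((B ⊗ B) ◁ D2) := by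
  intro D2 E2 hD2 hE2
  subst hD2 hE2
  refine ⟨?_, ?_, ?_⟩
  · calc _ = (Δ ▷ B ≫ (B ⊗ B) ◁ Δ) ⊗≫ (B ◁ (h ▷ B)) ⊗≫
        ((B ◁ ε ≫ ε ▷ 𝟙_ M) ▷ (B ⊗ B)) ⊗≫ 𝟙 (𝟙_ M ⊗ (B ⊗ B)) := by
          rw [tensorHom_def Δ Δ, tensorHom_def' ε ε]; monoidal
    _ = (Δ ▷ B ≫ (B ⊗ B) ◁ Δ) ⊗≫ (B ◁ ((h ≫ ε ▷ B ≫ (λ_ B).hom) ▷ B)) ⊗≫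
        (ε ▷ (B ⊗ B)) ⊗≫ 𝟙 (𝟙_ M ⊗ (B ⊗ B)) := by monoidal
    _ = (Δ ▷ B ≫ (B ⊗ B) ◁ Δ) ⊗≫ (B ◁ ((B ◁ ε ≫ (ρ_ B).hom) ▷ B)) ⊗≫
        (ε ▷ (B ⊗ B)) ⊗≫ 𝟙 (𝟙_ M ⊗ (B ⊗ B)) := by rw [hC3]
    _ = (Δ ▷ B) ⊗≫ ((B ⊗ B) ◁ ((Δ ≫ ε ▷ B) ≫ (λ_ B).hom)) ⊗≫
        (ε ▷ (B ⊗ B)) ⊗≫ 𝟙 (𝟙_ M ⊗ (B ⊗ B)) := by monoidal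
    _ = (Δ ▷ B) ⊗≫ ((B ⊗ B) ◁ ((λ_ B).inv ≫ (λ_ B).hom)) ⊗≫
        (ε ▷ (B ⊗ B)) ⊗≫ 𝟙 (𝟙_ M ⊗ (B ⊗ B)) := by rw [hcounit_l]
    _ = ((Δ ≫ ε ▷ B) ▷ B) ⊗≫ 𝟙 (𝟙_ M ⊗ (B ⊗ B)) := by monoidal
    _ = ((λ_ B).inv ▷ B) ⊗≫ 𝟙 (𝟙_ M ⊗ (B ⊗ B)) := by rw [hcounit_l]
    _ = (λ_ (B ⊗ B)).inv := by monoidal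
  · calc _ = (B ◁ Δ ≫ Δ ▷ (B ⊗ B)) ⊗≫ (B ◁ (h ▷ B)) ⊗≫
        ((B ⊗ B) ◁ (ε ▷ B ≫ 𝟙_ M ◁ ε)) ⊗≫ 𝟙 ((B ⊗ B) ⊗ 𝟙_ M) := by
          rw [tensorHom_def' Δ Δ, tensorHom_def ε ε]; monoidal
    _ = (B ◁ Δ ≫ Δ ▷ (B ⊗ B)) ⊗≫ (B ◁ ((h ≫ B ◁ ε ≫ (ρ_ B).hom) ▷ B)) ⊗≫
        (B ◁ (B ◁ ε)) ⊗≫ 𝟙 ((B ⊗ B) ⊗ 𝟙_ M) := by monoidal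
    _ = (B ◁ Δ ≫ Δ ▷ (B ⊗ B)) ⊗≫ (B ◁ ((ε ▷ B ≫ (λ_ B).hom) ▷ B)) ⊗≫
        (B ◁ (B ◁ ε)) ⊗≫ 𝟙 ((B ⊗ B) ⊗ 𝟙_ M) := by rw [hC1]
    _ = (B ◁ Δ) ⊗≫ (((Δ ≫ B ◁ ε) ≫ (ρ_ B).hom) ▷ (B ⊗ B)) ⊗≫
        (B ◁ (B ◁ ε)) ⊗≫ 𝟙 ((B ⊗ B) ⊗ 𝟙_ M) := by monoidal
    _ = (B ◁ Δ) ⊗≫ (((ρ_ B).inv ≫ (ρ_ B).hom) ▷ (B ⊗ B)) ⊗≫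
        (B ◁ (B ◁ ε)) ⊗≫ 𝟙 ((B ⊗ B) ⊗ 𝟙_ M) := by rw [hcounit_r]
    _ = (B ◁ (Δ ≫ B ◁ ε)) ⊗≫ 𝟙 ((B ⊗ B) ⊗ 𝟙_ M) := by monoidal
    _ = (B ◁ (ρ_ B).inv) ⊗≫ 𝟙 ((B ⊗ B) ⊗ 𝟙_ M) := by rw [hcounit_r]
    _ = (ρ_ (B ⊗ B)).inv := by monoidal

  · -- coassociativity
    have hco : Δ ≫ Δ ▷ B = Δ ≫ B ◁ Δ ≫ (α_ B B B).inv := by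
      conv_rhs => rw [← Category.assoc, ← hcoassoc]
      simp
    have exL1 : B ◁ ((B ◁ Δ ≫ (α_ B B B).inv ≫ h ▷ B ≫ (α_ B B B).hom ≫ B ◁ h ≫
          (α_ B B B).inv) ▷ B) ≫ Δ ▷ (((B ⊗ B) ⊗ B) ⊗ B) =
        Δ ▷ ((B ⊗ B) ⊗ B) ≫ (B ⊗ B) ◁ ((B ◁ Δ ≫ (α_ B B B).inv ≫ h ▷ B ≫
          (α_ B B B).hom ≫ B ◁ h ≫ (α_ B B B).inv) ▷ B) :=
      whisker_exchange Δ _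
    have exL2 : (B ⊗ (B ⊗ B)) ◁ (h ▷ B) ≫ (B ◁ h) ▷ ((B ⊗ B) ⊗ B) =
        (B ◁ h) ▷ ((B ⊗ B) ⊗ B) ≫ (B ⊗ (B ⊗ B)) ◁ (h ▷ B) :=
      whisker_exchange (B ◁ h) (h ▷ B)
    have exL3 : B ◁ Δ ≫ (Δ ≫ Δ ▷ B) ▷ (B ⊗ B) =
        (Δ ≫ Δ ▷ B) ▷ B ≫ ((B ⊗ B) ⊗ B) ◁ Δ :=
      whisker_exchange (Δ ≫ Δ ▷ B) Δ
    have exR1 : (B ⊗ ((B ⊗ B) ⊗ B)) ◁ Δ ≫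
          (B ◁ ((α_ B B B).hom ≫ B ◁ h ≫ (α_ B B B).inv ≫ h ▷ B)) ▷ (B ⊗ B) =
        (B ◁ ((α_ B B B).hom ≫ B ◁ h ≫ (α_ B B B).inv ≫ h ▷ B)) ▷ B ≫
          (B ⊗ ((B ⊗ B) ⊗ B)) ◁ Δ :=
      whisker_exchange _ Δ
    have exR2 : (B ⊗ B) ◁ Δ ≫ (B ◁ Δ) ▷ (B ⊗ B) =
        (B ◁ Δ) ▷ B ≫ (B ⊗ (B ⊗ B)) ◁ Δ :=
      whisker_exchange (B ◁ Δ) Δ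
    trans (((Δ ≫ B ◁ Δ) ▷ B) ⊗≫ (((B ⊗ B) ⊗ B) ◁ (Δ ≫ B ◁ Δ)) ⊗≫
        ((B ⊗ B) ◁ (h ▷ (B ⊗ B))) ⊗≫ ((B ◁ h) ▷ ((B ⊗ B) ⊗ B)) ⊗≫
        ((B ⊗ (B ⊗ B)) ◁ (h ▷ B)) ⊗≫ 𝟙 ((B ⊗ B) ⊗ ((B ⊗ B) ⊗ (B ⊗ B))))
    · calc _ = (B ◁ Δ ≫ Δ ▷ (B ⊗ B)) ⊗≫ (B ◁ ((h ≫ Δ ▷ B) ▷ B)) ⊗≫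
            (Δ ▷ (((B ⊗ B) ⊗ B) ⊗ B)) ⊗≫ (B ◁ (h ▷ (B ⊗ (B ⊗ B)))) ⊗≫
            𝟙 ((B ⊗ B) ⊗ ((B ⊗ B) ⊗ (B ⊗ B))) := by
              rw [tensorHom_def' Δ Δ]; monoidal
      _ = (B ◁ Δ ≫ Δ ▷ (B ⊗ B)) ⊗≫ (B ◁ ((B ◁ Δ ≫ (α_ B B B).inv ≫ h ▷ B ≫
          (α_ B B B).hom ≫ B ◁ h ≫ (α_ B B B).inv) ▷ B)) ⊗≫
          (Δ ▷ (((B ⊗ B) ⊗ B) ⊗ B)) ⊗≫ (B ◁ (h ▷ (B ⊗ (B ⊗ B)))) ⊗≫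
          𝟙 ((B ⊗ B) ⊗ ((B ⊗ B) ⊗ (B ⊗ B))) := by rw [hC4]
      _ = (B ◁ Δ ≫ Δ ▷ (B ⊗ B)) ⊗≫ (B ◁ ((B ◁ Δ ≫ (α_ B B B).inv ≫ h ▷ B ≫
          (α_ B B B).hom ≫ B ◁ h ≫ (α_ B B B).inv) ▷ B) ≫ Δ ▷ (((B ⊗ B) ⊗ B) ⊗ B)) ⊗≫
          (B ◁ (h ▷ (B ⊗ (B ⊗ B)))) ⊗≫
          𝟙 ((B ⊗ B) ⊗ ((B ⊗ B) ⊗ (B ⊗ B))) := by monoidal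
      _ = (B ◁ Δ ≫ Δ ▷ (B ⊗ B)) ⊗≫ (Δ ▷ ((B ⊗ B) ⊗ B) ≫ (B ⊗ B) ◁ ((B ◁ Δ ≫
          (α_ B B B).inv ≫ h ▷ B ≫ (α_ B B B).hom ≫ B ◁ h ≫ (α_ B B B).inv) ▷ B)) ⊗≫
          (B ◁ (h ▷ (B ⊗ (B ⊗ B)))) ⊗≫
          𝟙 ((B ⊗ B) ⊗ ((B ⊗ B) ⊗ (B ⊗ B))) := by rw [exL1]
      _ = (B ◁ Δ ≫ (Δ ≫ Δ ▷ B) ▷ (B ⊗ B)) ⊗≫ ((B ⊗ (B ⊗ B)) ◁ (Δ ▷ B)) ⊗≫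
          ((B ⊗ B) ◁ (h ▷ (B ⊗ B))) ⊗≫
          ((B ⊗ (B ⊗ B)) ◁ (h ▷ B) ≫ (B ◁ h) ▷ ((B ⊗ B) ⊗ B)) ⊗≫
          𝟙 ((B ⊗ B) ⊗ ((B ⊗ B) ⊗ (B ⊗ B))) := by monoidal
      _ = ((Δ ≫ Δ ▷ B) ▷ B ≫ ((B ⊗ B) ⊗ B) ◁ Δ) ⊗≫ ((B ⊗ (B ⊗ B)) ◁ (Δ ▷ B)) ⊗≫
          ((B ⊗ B) ◁ (h ▷ (B ⊗ B))) ⊗≫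
          ((B ◁ h) ▷ ((B ⊗ B) ⊗ B) ≫ (B ⊗ (B ⊗ B)) ◁ (h ▷ B)) ⊗≫
          𝟙 ((B ⊗ B) ⊗ ((B ⊗ B) ⊗ (B ⊗ B))) := by rw [exL3, exL2]
      _ = ((Δ ≫ Δ ▷ B) ▷ B) ⊗≫ (((B ⊗ B) ⊗ B) ◁ (Δ ≫ Δ ▷ B)) ⊗≫
          ((B ⊗ B) ◁ (h ▷ (B ⊗ B))) ⊗≫ ((B ◁ h) ▷ ((B ⊗ B) ⊗ B)) ⊗≫
          ((B ⊗ (B ⊗ B)) ◁ (h ▷ B)) ⊗≫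
          𝟙 ((B ⊗ B) ⊗ ((B ⊗ B) ⊗ (B ⊗ B))) := by monoidal
      _ = ((Δ ≫ B ◁ Δ ≫ (α_ B B B).inv) ▷ B) ⊗≫
          (((B ⊗ B) ⊗ B) ◁ (Δ ≫ B ◁ Δ ≫ (α_ B B B).inv)) ⊗≫
          ((B ⊗ B) ◁ (h ▷ (B ⊗ B))) ⊗≫ ((B ◁ h) ▷ ((B ⊗ B) ⊗ B)) ⊗≫
          ((B ⊗ (B ⊗ B)) ◁ (h ▷ B)) ⊗≫
          𝟙 ((B ⊗ B) ⊗ ((B ⊗ B) ⊗ (B ⊗ B))) := by rw [hco]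
      _ = _ := by monoidal
    · symm
      calc _ = (Δ ▷ B ≫ (B ⊗ B) ◁ Δ) ⊗≫ (B ◁ ((h ≫ B ◁ Δ) ▷ B)) ⊗≫
            ((B ⊗ (B ⊗ (B ⊗ B))) ◁ Δ) ⊗≫ ((B ⊗ (B ⊗ B)) ◁ (h ▷ B)) ⊗≫
            𝟙 ((B ⊗ B) ⊗ ((B ⊗ B) ⊗ (B ⊗ B))) := by
              rw [tensorHom_def Δ Δ]; monoidal
        _ = (Δ ▷ B ≫ (B ⊗ B) ◁ Δ) ⊗≫ (B ◁ ((Δ ▷ B ≫ (α_ B B B).hom ≫ B ◁ h ≫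
            (α_ B B B).inv ≫ h ▷ B ≫ (α_ B B B).hom) ▷ B)) ⊗≫
            ((B ⊗ (B ⊗ (B ⊗ B))) ◁ Δ) ⊗≫ ((B ⊗ (B ⊗ B)) ◁ (h ▷ B)) ⊗≫
            𝟙 ((B ⊗ B) ⊗ ((B ⊗ B) ⊗ (B ⊗ B))) := by rw [hC2]
        _ = (Δ ▷ B ≫ (B ⊗ B) ◁ Δ) ⊗≫ (B ◁ ((Δ ▷ B) ▷ B)) ⊗≫
            ((B ◁ ((α_ B B B).hom ≫ B ◁ h ≫ (α_ B B B).inv ≫ h ▷ B)) ▷ B ≫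
              (B ⊗ ((B ⊗ B) ⊗ B)) ◁ Δ) ⊗≫ ((B ⊗ (B ⊗ B)) ◁ (h ▷ B)) ⊗≫
            𝟙 ((B ⊗ B) ⊗ ((B ⊗ B) ⊗ (B ⊗ B))) := by monoidal
        _ = (Δ ▷ B ≫ (B ⊗ B) ◁ Δ) ⊗≫ (B ◁ ((Δ ▷ B) ▷ B)) ⊗≫
            ((B ⊗ ((B ⊗ B) ⊗ B)) ◁ Δ ≫
              (B ◁ ((α_ B B B).hom ≫ B ◁ h ≫ (α_ B B B).inv ≫ h ▷ B)) ▷ (B ⊗ B)) ⊗≫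
            ((B ⊗ (B ⊗ B)) ◁ (h ▷ B)) ⊗≫
            𝟙 ((B ⊗ B) ⊗ ((B ⊗ B) ⊗ (B ⊗ B))) := by rw [← exR1]
        _ = (Δ ▷ B) ⊗≫ ((B ⊗ B) ◁ Δ ≫ (B ◁ Δ) ▷ (B ⊗ B)) ⊗≫
            ((B ⊗ (B ⊗ (B ⊗ B))) ◁ Δ) ⊗≫ ((B ⊗ B) ◁ (h ▷ (B ⊗ B))) ⊗≫
            ((B ◁ h) ▷ ((B ⊗ B) ⊗ B)) ⊗≫ ((B ⊗ (B ⊗ B)) ◁ (h ▷ B)) ⊗≫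
            𝟙 ((B ⊗ B) ⊗ ((B ⊗ B) ⊗ (B ⊗ B))) := by monoidal
        _ = (Δ ▷ B) ⊗≫ ((B ◁ Δ) ▷ B ≫ (B ⊗ (B ⊗ B)) ◁ Δ) ⊗≫
            ((B ⊗ (B ⊗ (B ⊗ B))) ◁ Δ) ⊗≫ ((B ⊗ B) ◁ (h ▷ (B ⊗ B))) ⊗≫
            ((B ◁ h) ▷ ((B ⊗ B) ⊗ B)) ⊗≫ ((B ⊗ (B ⊗ B)) ◁ (h ▷ B)) ⊗≫
            𝟙 ((B ⊗ B) ⊗ ((B ⊗ B) ⊗ (B ⊗ B))) := by rw [exR2]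
        _ = _ := by monoidal
end

section
/- Let B be an object of M carrying both a monoid structure (B,μ,η) and a comonoid structure (B,Δ,ε), and let ħ : B⊗B → B⊗B be a double distributive law between them. Then B⊗B is a monoid in M with multiplication (μ⊗μ)∘(B⊗ħ⊗B) : (B⊗B)⊗(B⊗B) → B⊗B and unit η⊗η : 𝟙 → B⊗B. -/
open CategoryTheory MonoidalCategory

set_option maxHeartbeats 4000000 in
/-- Given an object `B` with a monoid structure `(μ, η)` and a comonoid structure `(Δ, ε)`
together with a double distributive law `h : B ⊗ B ⟶ B ⊗ B`, the object `B ⊗ B` is a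
monoid with multiplication `(μ ⊗ₘ μ) ∘ (B ⊗ h ⊗ B)` and unit `η ⊗ η`. -/
theorem stmt_13 {M : Type*} [Category M] [MonoidalCategory M]
    (B : M) (μ : B ⊗ B ⟶ B) (η : 𝟙_ M ⟶ B) (Δ : B ⟶ B ⊗ B) (ε : B ⟶ 𝟙_ M)
    (hassoc : (μ ▷ B) ≫ μ = (α_ B B B).hom ≫ (B ◁ μ) ≫ μ)
    (hunit_l : (η ▷ B) ≫ μ = (λ_ B).hom)
    (hunit_r : (B ◁ η) ≫ μ = (ρ_ B).hom)
    (hcounit_l : Δ ≫ (ε ▷ B) = (λ_ B).inv)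
    (hcounit_r : Δ ≫ (B ◁ ε) = (ρ_ B).inv)
    (hcoassoc : Δ ≫ (Δ ▷ B) ≫ (α_ B B B).hom = Δ ≫ (B ◁ Δ))
    (h : B ⊗ B ⟶ B ⊗ B)
    (hA1 : (η ▷ B) ≫ h = (λ_ B).hom ≫ (ρ_ B).inv ≫ (B ◁ η))
    (hA2 : (μ ▷ B) ≫ h =
      (α_ B B B).hom ≫ (B ◁ h) ≫ (α_ B B B).inv ≫ (h ▷ B) ≫ (α_ B B B).hom ≫ (B ◁ μ))
    (hA3 : (B ◁ η) ≫ h = (ρ_ B).hom ≫ (λ_ B).inv ≫ (η ▷ B))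
    (hA4 : (B ◁ μ) ≫ h =
      (α_ B B B).inv ≫ (h ▷ B) ≫ (α_ B B B).hom ≫ (B ◁ h) ≫ (α_ B B B).inv ≫ (μ ▷ B))
    (hC1 : h ≫ (B ◁ ε) ≫ (ρ_ B).hom = (ε ▷ B) ≫ (λ_ B).hom)
    (hC2 : h ≫ (B ◁ Δ) =
      (Δ ▷ B) ≫ (α_ B B B).hom ≫ (B ◁ h) ≫ (α_ B B B).inv ≫ (h ▷ B) ≫ (α_ B B B).hom)
    (hC3 : h ≫ (ε ▷ B) ≫ (λ_ B).hom = (B ◁ ε) ≫ (ρ_ B).hom)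
    (hC4 : h ≫ (Δ ▷ B) =
      (B ◁ Δ) ≫ (α_ B B B).inv ≫ (h ▷ B) ≫ (α_ B B B).hom ≫ (B ◁ h) ≫ (α_ B B B).inv) :
    ∀ (m2 : (B ⊗ B) ⊗ (B ⊗ B) ⟶ B ⊗ B) (e2 : 𝟙_ M ⟶ B ⊗ B),
      m2 = (α_ (B ⊗ B) B B).inv ≫ ((α_ B B B).hom ▷ B) ≫ ((B ◁ h) ▷ B) ≫
          ((α_ B B B).inv ▷ B) ≫ (α_ (B ⊗ B) B B).hom ≫ (μ ⊗ₘ μ) →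
      e2 = (λ_ (𝟙_ M)).inv ≫ (η ⊗ₘ η) →
      (e2 ▷ (B ⊗ B)) ≫ m2 = (λ_ (B ⊗ B)).hom ∧
      ((B ⊗ B) ◁ e2) ≫ m2 = (ρ_ (B ⊗ B)).hom ∧
      (m2 ▷ (B ⊗ B)) ≫ m2 = (α_ (B ⊗ B) (B ⊗ B) (B ⊗ B)).hom ≫ ((B ⊗ B) ◁ m2) ≫ m2 := by
  intro m2 e2 hm he
  subst hm he
  refine ⟨?_, ?_, ?_⟩
  · -- left unit law
    calc _ = η ▷ (B ⊗ B) ⊗≫ (B ◁ (((η ▷ B) ≫ h) ▷ B)) ⊗≫ (μ ▷ (B ⊗ B)) ⊗≫ (B ◁ μ) := by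
          simp only [MonoidalCategory.tensorHom_def]; monoidal
      _ = η ▷ (B ⊗ B) ⊗≫ (B ◁ (((λ_ B).hom ≫ (ρ_ B).inv ≫ (B ◁ η)) ▷ B)) ⊗≫
            (μ ▷ (B ⊗ B)) ⊗≫ (B ◁ μ) := by
          rw [hA1]
      _ = (η ▷ (B ⊗ B)) ≫ (α_ B B B).inv ≫
            (((B ⊗ B) ◁ ((λ_ B).inv ≫ (η ▷ B))) ≫ (μ ▷ (B ⊗ B))) ≫ (B ◁ μ) := by
          monoidal
      _ = (η ▷ (B ⊗ B)) ≫ (α_ B B B).inv ≫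
            ((μ ▷ B) ≫ (B ◁ ((λ_ B).inv ≫ (η ▷ B)))) ≫ (B ◁ μ) := by
          rw [whisker_exchange]
      _ = (α_ (𝟙_ M) B B).inv ≫ (((η ▷ B) ≫ μ) ▷ B) ≫ (B ◁ ((λ_ B).inv ≫ (η ▷ B) ≫ μ)) := by
          monoidal
      _ = (λ_ (B ⊗ B)).hom := by rw [hunit_l]; monoidal
  · -- right unit law
    calc _ = (B ⊗ B) ◁ η ⊗≫ ((B ◁ ((B ◁ η) ≫ h)) ▷ B) ⊗≫ ((B ⊗ B) ◁ μ) ⊗≫ (μ ▷ B) := by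
          simp only [tensorHom_def']; monoidal
      _ = (B ⊗ B) ◁ η ⊗≫ ((B ◁ ((ρ_ B).hom ≫ (λ_ B).inv ≫ (η ▷ B))) ▷ B) ⊗≫
            ((B ⊗ B) ◁ μ) ⊗≫ (μ ▷ B) := by
          rw [hA3]
      _ = ((B ⊗ B) ◁ η) ≫ (α_ B B B).hom ≫
            ((((ρ_ B).inv ≫ (B ◁ η)) ▷ (B ⊗ B)) ≫ ((B ⊗ B) ◁ μ)) ≫ (μ ▷ B) := by
          monoidal
      _ = ((B ⊗ B) ◁ η) ≫ (α_ B B B).hom ≫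
            ((B ◁ μ) ≫ (((ρ_ B).inv ≫ (B ◁ η)) ▷ B)) ≫ (μ ▷ B) := by
          rw [← whisker_exchange]
      _ = (α_ B B (𝟙_ M)).hom ≫ (B ◁ ((B ◁ η) ≫ μ)) ≫ (((ρ_ B).inv ≫ (B ◁ η) ≫ μ) ▷ B) := by
          monoidal
      _ = (ρ_ (B ⊗ B)).hom := by rw [hunit_r]; monoidal
  · -- associativity
    have hL : (((α_ (B ⊗ B) B B).inv ≫ ((α_ B B B).hom ▷ B) ≫ ((B ◁ h) ▷ B) ≫
            ((α_ B B B).inv ▷ B) ≫ (α_ (B ⊗ B) B B).hom ≫ (μ ⊗ₘ μ)) ▷ (B ⊗ B)) ≫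
          ((α_ (B ⊗ B) B B).inv ≫ ((α_ B B B).hom ▷ B) ≫ ((B ◁ h) ▷ B) ≫
            ((α_ B B B).inv ▷ B) ≫ (α_ (B ⊗ B) B B).hom ≫ (μ ⊗ₘ μ)) =
        𝟙 (((B ⊗ B) ⊗ (B ⊗ B)) ⊗ (B ⊗ B)) ⊗≫ ((B ⊗ B) ◁ ((B ◁ h) ▷ B)) ⊗≫
          (B ◁ (h ▷ ((B ⊗ B) ⊗ B))) ⊗≫ (B ◁ (B ◁ (h ▷ (B ⊗ B)))) ⊗≫
          (((μ ▷ B) ≫ μ) ▷ ((B ⊗ B) ⊗ B)) ⊗≫ (B ◁ ((μ ▷ B) ≫ μ)) := by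
      calc _ = 𝟙 (((B ⊗ B) ⊗ (B ⊗ B)) ⊗ (B ⊗ B)) ⊗≫ (((B ◁ h) ▷ B) ▷ (B ⊗ B)) ⊗≫
              (μ ▷ ((B ⊗ B) ⊗ (B ⊗ B))) ⊗≫ (B ◁ (((μ ▷ B) ≫ h) ▷ B)) ⊗≫
              (μ ▷ (B ⊗ B)) ⊗≫ (B ◁ μ) := by
            simp only [MonoidalCategory.tensorHom_def]; monoidal
        _ = 𝟙 (((B ⊗ B) ⊗ (B ⊗ B)) ⊗ (B ⊗ B)) ⊗≫ (((B ◁ h) ▷ B) ▷ (B ⊗ B)) ⊗≫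
              (μ ▷ ((B ⊗ B) ⊗ (B ⊗ B))) ⊗≫ (B ◁ (((α_ B B B).hom ≫ (B ◁ h) ≫ (α_ B B B).inv ≫
                (h ▷ B) ≫ (α_ B B B).hom ≫ (B ◁ μ)) ▷ B)) ⊗≫
              (μ ▷ (B ⊗ B)) ⊗≫ (B ◁ μ) := by
            rw [hA2]
        _ = 𝟙 (((B ⊗ B) ⊗ (B ⊗ B)) ⊗ (B ⊗ B)) ⊗≫
              (((B ◁ h ≫ (α_ B B B).inv ≫ μ ▷ B) ▷ ((B ⊗ B) ⊗ B)) ≫ ((B ⊗ B) ◁ (h ▷ B))) ⊗≫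
              (B ◁ (h ▷ (B ⊗ B))) ⊗≫ ((B ⊗ B) ◁ (μ ▷ B)) ⊗≫ (μ ▷ (B ⊗ B)) ⊗≫ (B ◁ μ) := by
            monoidal
        _ = 𝟙 (((B ⊗ B) ⊗ (B ⊗ B)) ⊗ (B ⊗ B)) ⊗≫
              (((B ⊗ (B ⊗ B)) ◁ (h ▷ B)) ≫ ((B ◁ h ≫ (α_ B B B).inv ≫ μ ▷ B) ▷ ((B ⊗ B) ⊗ B))) ⊗≫
              (B ◁ (h ▷ (B ⊗ B))) ⊗≫ ((B ⊗ B) ◁ (μ ▷ B)) ⊗≫ (μ ▷ (B ⊗ B)) ⊗≫ (B ◁ μ) := by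
            rw [← whisker_exchange]
        _ = 𝟙 (((B ⊗ B) ⊗ (B ⊗ B)) ⊗ (B ⊗ B)) ⊗≫ ((B ⊗ B) ◁ ((B ◁ h) ▷ B)) ⊗≫
              (B ◁ (h ▷ (B ⊗ (B ⊗ B)))) ⊗≫
              ((μ ▷ (B ⊗ (B ⊗ (B ⊗ B)))) ≫ (B ◁ ((α_ B B (B ⊗ B)).inv ≫ (h ▷ (B ⊗ B))))) ⊗≫
              ((B ⊗ B) ◁ (μ ▷ B)) ⊗≫ (μ ▷ (B ⊗ B)) ⊗≫ (B ◁ μ) := by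
            monoidal
        _ = 𝟙 (((B ⊗ B) ⊗ (B ⊗ B)) ⊗ (B ⊗ B)) ⊗≫ ((B ⊗ B) ◁ ((B ◁ h) ▷ B)) ⊗≫
              (B ◁ (h ▷ (B ⊗ (B ⊗ B)))) ⊗≫
              (((B ⊗ B) ◁ ((α_ B B (B ⊗ B)).inv ≫ (h ▷ (B ⊗ B)))) ≫ (μ ▷ ((B ⊗ B) ⊗ (B ⊗ B)))) ⊗≫
              ((B ⊗ B) ◁ (μ ▷ B)) ⊗≫ (μ ▷ (B ⊗ B)) ⊗≫ (B ◁ μ) := by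
            rw [← whisker_exchange]
        _ = 𝟙 (((B ⊗ B) ⊗ (B ⊗ B)) ⊗ (B ⊗ B)) ⊗≫ ((B ⊗ B) ◁ ((B ◁ h) ▷ B)) ⊗≫
              (B ◁ (h ▷ ((B ⊗ B) ⊗ B))) ⊗≫ (B ◁ (B ◁ (h ▷ (B ⊗ B)))) ⊗≫
              (μ ▷ (B ⊗ ((B ⊗ B) ⊗ B))) ⊗≫
              (((B ⊗ B) ◁ (μ ▷ B)) ≫ (μ ▷ (B ⊗ B))) ⊗≫ (B ◁ μ) := by
            monoidal
        _ = 𝟙 (((B ⊗ B) ⊗ (B ⊗ B)) ⊗ (B ⊗ B)) ⊗≫ ((B ⊗ B) ◁ ((B ◁ h) ▷ B)) ⊗≫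
              (B ◁ (h ▷ ((B ⊗ B) ⊗ B))) ⊗≫ (B ◁ (B ◁ (h ▷ (B ⊗ B)))) ⊗≫
              (μ ▷ (B ⊗ ((B ⊗ B) ⊗ B))) ⊗≫
              ((μ ▷ ((B ⊗ B) ⊗ B)) ≫ (B ◁ (μ ▷ B))) ⊗≫ (B ◁ μ) := by
            rw [whisker_exchange]
        _ = _ := by monoidal
    have hR : (α_ (B ⊗ B) (B ⊗ B) (B ⊗ B)).hom ≫
          ((B ⊗ B) ◁ ((α_ (B ⊗ B) B B).inv ≫ ((α_ B B B).hom ▷ B) ≫ ((B ◁ h) ▷ B) ≫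
            ((α_ B B B).inv ▷ B) ≫ (α_ (B ⊗ B) B B).hom ≫ (μ ⊗ₘ μ))) ≫
          ((α_ (B ⊗ B) B B).inv ≫ ((α_ B B B).hom ▷ B) ≫ ((B ◁ h) ▷ B) ≫
            ((α_ B B B).inv ▷ B) ≫ (α_ (B ⊗ B) B B).hom ≫ (μ ⊗ₘ μ)) =
        𝟙 (((B ⊗ B) ⊗ (B ⊗ B)) ⊗ (B ⊗ B)) ⊗≫ ((B ⊗ B) ◁ ((B ◁ h) ▷ B)) ⊗≫
          (B ◁ (h ▷ ((B ⊗ B) ⊗ B))) ⊗≫ (B ◁ (B ◁ (h ▷ (B ⊗ B)))) ⊗≫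
          (((μ ▷ B) ≫ μ) ▷ ((B ⊗ B) ⊗ B)) ⊗≫ (B ◁ ((μ ▷ B) ≫ μ)) := by
      calc _ = 𝟙 (((B ⊗ B) ⊗ (B ⊗ B)) ⊗ (B ⊗ B)) ⊗≫ ((B ⊗ B) ◁ ((B ◁ h) ▷ B)) ⊗≫
              ((B ⊗ B) ◁ ((B ⊗ B) ◁ μ)) ⊗≫ (B ◁ (((B ◁ μ) ≫ h) ▷ B)) ⊗≫
              (((B ⊗ B) ◁ μ) ≫ (μ ▷ B)) := by
            simp only [tensorHom_def']; monoidal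
        _ = 𝟙 (((B ⊗ B) ⊗ (B ⊗ B)) ⊗ (B ⊗ B)) ⊗≫ ((B ⊗ B) ◁ ((B ◁ h) ▷ B)) ⊗≫
              ((B ⊗ B) ◁ ((B ⊗ B) ◁ μ)) ⊗≫ (B ◁ (((α_ B B B).inv ≫ (h ▷ B) ≫ (α_ B B B).hom ≫
                (B ◁ h) ≫ (α_ B B B).inv ≫ (μ ▷ B)) ▷ B)) ⊗≫
              (((B ⊗ B) ◁ μ) ≫ (μ ▷ B)) := by
            rw [hA4]
        _ = 𝟙 (((B ⊗ B) ⊗ (B ⊗ B)) ⊗ (B ⊗ B)) ⊗≫ ((B ⊗ B) ◁ ((B ◁ h) ▷ B)) ⊗≫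
              ((B ⊗ B) ◁ ((B ⊗ B) ◁ μ)) ⊗≫ (B ◁ (((α_ B B B).inv ≫ (h ▷ B) ≫ (α_ B B B).hom ≫
                (B ◁ h) ≫ (α_ B B B).inv ≫ (μ ▷ B)) ▷ B)) ⊗≫
              ((μ ▷ (B ⊗ B)) ≫ (B ◁ μ)) := by
            rw [whisker_exchange μ μ]
        _ = 𝟙 (((B ⊗ B) ⊗ (B ⊗ B)) ⊗ (B ⊗ B)) ⊗≫ ((B ⊗ B) ◁ ((B ◁ h) ▷ B)) ⊗≫
              ((((B ⊗ B) ⊗ (B ⊗ B)) ◁ μ) ≫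
                (((α_ B B (B ⊗ B)).hom ≫ (B ◁ ((α_ B B B).inv ≫ (h ▷ B) ≫ (α_ B B B).hom ≫
                  (B ◁ h) ≫ (α_ B B B).inv ≫ (μ ▷ B))) ≫ (α_ B B B).inv ≫ (μ ▷ B)) ▷ B)) ⊗≫
              (B ◁ μ) := by
            monoidal
        _ = 𝟙 (((B ⊗ B) ⊗ (B ⊗ B)) ⊗ (B ⊗ B)) ⊗≫ ((B ⊗ B) ◁ ((B ◁ h) ▷ B)) ⊗≫
              ((((α_ B B (B ⊗ B)).hom ≫ (B ◁ ((α_ B B B).inv ≫ (h ▷ B) ≫ (α_ B B B).hom ≫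
                  (B ◁ h) ≫ (α_ B B B).inv ≫ (μ ▷ B))) ≫ (α_ B B B).inv ≫ (μ ▷ B)) ▷ (B ⊗ B)) ≫
                ((B ⊗ B) ◁ μ)) ⊗≫
              (B ◁ μ) := by
            rw [whisker_exchange]
        _ = 𝟙 (((B ⊗ B) ⊗ (B ⊗ B)) ⊗ (B ⊗ B)) ⊗≫ ((B ⊗ B) ◁ ((B ◁ h) ▷ B)) ⊗≫
              (B ◁ (h ▷ ((B ⊗ B) ⊗ B))) ⊗≫ (B ◁ (B ◁ (h ▷ (B ⊗ B)))) ⊗≫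
              (((α_ B B B).hom ≫ (B ◁ μ) ≫ μ) ▷ ((B ⊗ B) ⊗ B)) ⊗≫
              (B ◁ ((α_ B B B).hom ≫ (B ◁ μ) ≫ μ)) := by
            monoidal
        _ = _ := by rw [← hassoc]
    exact hL.trans hR.symm
end

section
/- Let k be a commutative ring and L a k-module, and let B := k ⊕ L be the trivial square-zero extension: a k-algebra with multiplication (a,x)(b,y) = (ab, ay + bx) and unit 1_B = (1,0), equipped with the k-coalgebra structure Δ(a,x) = (a,x)⊗(1,0) + (1,0)⊗(0,x) and ε(a,x) = a. Then the k-linear map ħ : B⊗B → B⊗B determined by ħ((a,x)⊗(b,y)) = (b,y)⊗(a,0) + (b,0)⊗(0,x) − (0,x)⊗(0,y) is a double distributive law between the algebra and coalgebra structures of B; that is, ħ satisfies all eight equations: ħ∘(η⊗B) = B⊗η; ħ∘(μ⊗B) = (B⊗μ)∘(ħ⊗B)∘(B⊗ħ); ħ∘(B⊗η) = η⊗B; ħ∘(B⊗μ) = (μ⊗B)∘(B⊗ħ)∘(ħ⊗B); (B⊗ε)∘ħ = ε⊗B; (B⊗Δ)∘ħ = (ħ⊗B)∘(B⊗ħ)∘(Δ⊗B);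 (ε⊗B)∘ħ = B⊗ε; (Δ⊗B)∘ħ = (B⊗ħ)∘(ħ⊗B)∘(B⊗Δ), where μ : B⊗B → B is the multiplication and η : k → B the unit of B. -/
open scoped TensorProduct

/-- A double distributive law between an algebra structure `(μ, η)` and a coalgebra
structure `(Δ, ε)` on a `k`-module `B`: a `k`-linear map `h : B ⊗ B → B ⊗ B` satisfying
the eight equations (A-1)–(A-4) and (C-1)–(C-4), written with the canonical identifications
`k ⊗ B ≅ B ≅ B ⊗ k` and the associator made explicit. -/
def IsDDL (k : Type*) [CommRing k] (B : Type*) [AddCommGroup B] [Module k B]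
    (μ : B ⊗[k] B →ₗ[k] B) (η : k →ₗ[k] B)
    (Δ : B →ₗ[k] B ⊗[k] B) (ε : B →ₗ[k] k)
    (h : B ⊗[k] B →ₗ[k] B ⊗[k] B) : Prop :=
  (h ∘ₗ TensorProduct.map η LinearMap.id ∘ₗ (TensorProduct.lid k B).symm.toLinearMap
      = TensorProduct.map LinearMap.id η ∘ₗ (TensorProduct.rid k B).symm.toLinearMap) ∧
  (h ∘ₗ TensorProduct.map μ LinearMap.id
      = TensorProduct.map LinearMap.id μ
          ∘ₗ (TensorProduct.assoc k B B B).toLinearMap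
          ∘ₗ TensorProduct.map h LinearMap.id
          ∘ₗ (TensorProduct.assoc k B B B).symm.toLinearMap
          ∘ₗ TensorProduct.map LinearMap.id h
          ∘ₗ (TensorProduct.assoc k B B B).toLinearMap) ∧
  (h ∘ₗ TensorProduct.map LinearMap.id η ∘ₗ (TensorProduct.rid k B).symm.toLinearMap
      = TensorProduct.map η LinearMap.id ∘ₗ (TensorProduct.lid k B).symm.toLinearMap) ∧
  (h ∘ₗ TensorProduct.map LinearMap.id μ
      = TensorProduct.map μ LinearMap.id
          ∘ₗ (TensorProduct.assoc k B B B).symm.toLinearMap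
          ∘ₗ TensorProduct.map LinearMap.id h
          ∘ₗ (TensorProduct.assoc k B B B).toLinearMap
          ∘ₗ TensorProduct.map h LinearMap.id
          ∘ₗ (TensorProduct.assoc k B B B).symm.toLinearMap) ∧
  ((TensorProduct.rid k B).toLinearMap ∘ₗ TensorProduct.map LinearMap.id ε ∘ₗ h
      = (TensorProduct.lid k B).toLinearMap ∘ₗ TensorProduct.map ε LinearMap.id) ∧
  (TensorProduct.map LinearMap.id Δ ∘ₗ h
      = (TensorProduct.assoc k B B B).toLinearMap
          ∘ₗ TensorProduct.map h LinearMap.id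
          ∘ₗ (TensorProduct.assoc k B B B).symm.toLinearMap
          ∘ₗ TensorProduct.map LinearMap.id h
          ∘ₗ (TensorProduct.assoc k B B B).toLinearMap
          ∘ₗ TensorProduct.map Δ LinearMap.id) ∧
  ((TensorProduct.lid k B).toLinearMap ∘ₗ TensorProduct.map ε LinearMap.id ∘ₗ h
      = (TensorProduct.rid k B).toLinearMap ∘ₗ TensorProduct.map LinearMap.id ε) ∧
  (TensorProduct.map Δ LinearMap.id ∘ₗ h
      = (TensorProduct.assoc k B B B).symm.toLinearMap
          ∘ₗ TensorProduct.map LinearMap.id h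
          ∘ₗ (TensorProduct.assoc k B B B).toLinearMap
          ∘ₗ TensorProduct.map h LinearMap.id
          ∘ₗ (TensorProduct.assoc k B B B).symm.toLinearMap
          ∘ₗ TensorProduct.map LinearMap.id Δ)


private def sq0E (k : Type*) [CommRing k] (L : Type*) [AddCommGroup L] [Module k L] :
    k × L := (1, 0)

private theorem sq0_mk_decomp (k : Type*) [CommRing k] (L : Type*) [AddCommGroup L]
    [Module k L] (a : k) (x : L) :
    ((a, x) : k × L) = a • sq0E k L + LinearMap.inr k k L x := by
  simp [sq0E, Prod.ext_iff]

private theorem sq0_ext3' {R M N P Q : Type*} [CommRing R] [AddCommGroup M] [AddCommGroup N]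
    [AddCommGroup P] [AddCommGroup Q] [Module R M] [Module R N] [Module R P] [Module R Q]
    {g h : M ⊗[R] (N ⊗[R] P) →ₗ[R] Q}
    (H : ∀ x y z, g (x ⊗ₜ (y ⊗ₜ z)) = h (x ⊗ₜ (y ⊗ₜ z))) : g = h := by
  refine TensorProduct.ext' fun x yz => ?_
  induction yz using TensorProduct.induction_on with
  | zero => simp [TensorProduct.tmul_zero]
  | tmul y z => exact H x y z
  | add u v hu hv => simp only [TensorProduct.tmul_add, map_add, hu, hv]

set_option maxHeartbeats 2000000
set_option synthInstance.maxHeartbeats 200000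

/-- On the trivial square-zero extension `B = k ⊕ L` with its algebra structure
`(a,x)(b,y) = (ab, ay + bx)`, unit `(1,0)`, coalgebra structure
`Δ(a,x) = (a,x)⊗(1,0) + (1,0)⊗(0,x)`, `ε(a,x) = a`, the `k`-linear map determined by
`h((a,x)⊗(b,y)) = (b,y)⊗(a,0) + (b,0)⊗(0,x) − (0,x)⊗(0,y)` is a double distributive
law. -/
theorem stmt_18 (k : Type*) [CommRing k] (L : Type*) [AddCommGroup L] [Module k L]
    (μ : (k × L) ⊗[k] (k × L) →ₗ[k] k × L) (η : k →ₗ[k] k × L)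
    (Δ : k × L →ₗ[k] (k × L) ⊗[k] (k × L)) (ε : k × L →ₗ[k] k)
    (h : (k × L) ⊗[k] (k × L) →ₗ[k] (k × L) ⊗[k] (k × L))
    (hμ : ∀ (a b : k) (x y : L), μ ((a, x) ⊗ₜ[k] (b, y)) = (a * b, a • y + b • x))
    (hη : ∀ a : k, η a = (a, 0))
    (hΔ : ∀ (a : k) (x : L),
      Δ (a, x) = (a, x) ⊗ₜ[k] ((1 : k), (0 : L)) + ((1 : k), (0 : L)) ⊗ₜ[k] ((0 : k), x))
    (hε : ∀ (a : k) (x : L), ε (a, x) = a)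
    (hh : ∀ (a b : k) (x y : L),
      h ((a, x) ⊗ₜ[k] (b, y)) =
        (b, y) ⊗ₜ[k] ((a : k), (0 : L)) + ((b : k), (0 : L)) ⊗ₜ[k] ((0 : k), x)
          - ((0 : k), x) ⊗ₜ[k] ((0 : k), y)) :
    IsDDL k (k × L) μ η Δ ε h := by
  refine ⟨?_, ?_, ?_, ?_, ?_, ?_, ?_, ?_⟩
  · refine LinearMap.ext fun p => ?_
    obtain ⟨a, x⟩ := p
    simp only [LinearMap.coe_comp, LinearEquiv.coe_coe, Function.comp_apply,
      TensorProduct.map_tmul, LinearMap.id_coe, id_eq,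
      TensorProduct.assoc_tmul, TensorProduct.assoc_symm_tmul,
      TensorProduct.lid_symm_apply, TensorProduct.rid_symm_apply,
      TensorProduct.lid_tmul, TensorProduct.rid_tmul,
      map_add, map_sub, TensorProduct.tmul_add, TensorProduct.add_tmul,
      TensorProduct.tmul_sub, TensorProduct.sub_tmul, hμ, hη, hΔ, hε, hh,
      TensorProduct.smul_tmul', TensorProduct.tmul_smul]
    try simp only [sq0_mk_decomp, map_add, map_smul, map_zero, map_sub, smul_zero, add_zero,
      zero_add, one_smul, zero_smul, smul_add, smul_sub,
      TensorProduct.tmul_add, TensorProduct.add_tmul,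
      TensorProduct.tmul_sub, TensorProduct.sub_tmul,
      TensorProduct.smul_tmul', TensorProduct.tmul_smul, smul_smul,
      TensorProduct.zero_tmul, TensorProduct.tmul_zero,
      mul_zero, zero_mul, mul_one, one_mul, sub_zero]
    try simp only [← TensorProduct.smul_tmul', TensorProduct.zero_tmul, TensorProduct.tmul_zero,
      zero_smul, smul_zero, add_zero, zero_add, sub_zero]
    try module
  · refine TensorProduct.ext_threefold fun p q r => ?_
    obtain ⟨a, x⟩ := p; obtain ⟨b, y⟩ := q; obtain ⟨c, z⟩ := r
    simp only [LinearMap.coe_comp, LinearEquiv.coe_coe, Function.comp_apply,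
      TensorProduct.map_tmul, LinearMap.id_coe, id_eq,
      TensorProduct.assoc_tmul, TensorProduct.assoc_symm_tmul,
      TensorProduct.lid_symm_apply, TensorProduct.rid_symm_apply,
      TensorProduct.lid_tmul, TensorProduct.rid_tmul,
      map_add, map_sub, TensorProduct.tmul_add, TensorProduct.add_tmul,
      TensorProduct.tmul_sub, TensorProduct.sub_tmul, hμ, hη, hΔ, hε, hh,
      TensorProduct.smul_tmul', TensorProduct.tmul_smul]
    try simp only [sq0_mk_decomp, map_add, map_smul, map_zero, map_sub, smul_zero, add_zero,
      zero_add, one_smul, zero_smul, smul_add, smul_sub,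
      TensorProduct.tmul_add, TensorProduct.add_tmul,
      TensorProduct.tmul_sub, TensorProduct.sub_tmul,
      TensorProduct.smul_tmul', TensorProduct.tmul_smul, smul_smul,
      TensorProduct.zero_tmul, TensorProduct.tmul_zero,
      mul_zero, zero_mul, mul_one, one_mul, sub_zero]
    try simp only [← TensorProduct.smul_tmul', TensorProduct.zero_tmul, TensorProduct.tmul_zero,
      zero_smul, smul_zero, add_zero, zero_add, sub_zero]
    try module
  · refine LinearMap.ext fun p => ?_
    obtain ⟨a, x⟩ := p
    simp only [LinearMap.coe_comp, LinearEquiv.coe_coe, Function.comp_apply,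
      TensorProduct.map_tmul, LinearMap.id_coe, id_eq,
      TensorProduct.assoc_tmul, TensorProduct.assoc_symm_tmul,
      TensorProduct.lid_symm_apply, TensorProduct.rid_symm_apply,
      TensorProduct.lid_tmul, TensorProduct.rid_tmul,
      map_add, map_sub, TensorProduct.tmul_add, TensorProduct.add_tmul,
      TensorProduct.tmul_sub, TensorProduct.sub_tmul, hμ, hη, hΔ, hε, hh,
      TensorProduct.smul_tmul', TensorProduct.tmul_smul]
    try simp only [sq0_mk_decomp, map_add, map_smul, map_zero, map_sub, smul_zero, add_zero,
      zero_add, one_smul, zero_smul, smul_add, smul_sub,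
      TensorProduct.tmul_add, TensorProduct.add_tmul,
      TensorProduct.tmul_sub, TensorProduct.sub_tmul,
      TensorProduct.smul_tmul', TensorProduct.tmul_smul, smul_smul,
      TensorProduct.zero_tmul, TensorProduct.tmul_zero,
      mul_zero, zero_mul, mul_one, one_mul, sub_zero]
    try simp only [← TensorProduct.smul_tmul', TensorProduct.zero_tmul, TensorProduct.tmul_zero,
      zero_smul, smul_zero, add_zero, zero_add, sub_zero]
    try module
  · refine sq0_ext3' fun p q r => ?_
    obtain ⟨a, x⟩ := p; obtain ⟨b, y⟩ := q; obtain ⟨c, z⟩ := r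
    simp only [LinearMap.coe_comp, LinearEquiv.coe_coe, Function.comp_apply,
      TensorProduct.map_tmul, LinearMap.id_coe, id_eq,
      TensorProduct.assoc_tmul, TensorProduct.assoc_symm_tmul,
      TensorProduct.lid_symm_apply, TensorProduct.rid_symm_apply,
      TensorProduct.lid_tmul, TensorProduct.rid_tmul,
      map_add, map_sub, TensorProduct.tmul_add, TensorProduct.add_tmul,
      TensorProduct.tmul_sub, TensorProduct.sub_tmul, hμ, hη, hΔ, hε, hh,
      TensorProduct.smul_tmul', TensorProduct.tmul_smul]
    try simp only [sq0_mk_decomp, map_add, map_smul, map_zero, map_sub, smul_zero, add_zero,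
      zero_add, one_smul, zero_smul, smul_add, smul_sub,
      TensorProduct.tmul_add, TensorProduct.add_tmul,
      TensorProduct.tmul_sub, TensorProduct.sub_tmul,
      TensorProduct.smul_tmul', TensorProduct.tmul_smul, smul_smul,
      TensorProduct.zero_tmul, TensorProduct.tmul_zero,
      mul_zero, zero_mul, mul_one, one_mul, sub_zero]
    try simp only [← TensorProduct.smul_tmul', TensorProduct.zero_tmul, TensorProduct.tmul_zero,
      zero_smul, smul_zero, add_zero, zero_add, sub_zero]
    try module
  · refine TensorProduct.ext' fun p q => ?_
    obtain ⟨a, x⟩ := p; obtain ⟨b, y⟩ := q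
    simp only [LinearMap.coe_comp, LinearEquiv.coe_coe, Function.comp_apply,
      TensorProduct.map_tmul, LinearMap.id_coe, id_eq,
      TensorProduct.assoc_tmul, TensorProduct.assoc_symm_tmul,
      TensorProduct.lid_symm_apply, TensorProduct.rid_symm_apply,
      TensorProduct.lid_tmul, TensorProduct.rid_tmul,
      map_add, map_sub, TensorProduct.tmul_add, TensorProduct.add_tmul,
      TensorProduct.tmul_sub, TensorProduct.sub_tmul, hμ, hη, hΔ, hε, hh,
      TensorProduct.smul_tmul', TensorProduct.tmul_smul]
    try simp only [sq0_mk_decomp, map_add, map_smul, map_zero, map_sub, smul_zero, add_zero,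
      zero_add, one_smul, zero_smul, smul_add, smul_sub,
      TensorProduct.tmul_add, TensorProduct.add_tmul,
      TensorProduct.tmul_sub, TensorProduct.sub_tmul,
      TensorProduct.smul_tmul', TensorProduct.tmul_smul, smul_smul,
      TensorProduct.zero_tmul, TensorProduct.tmul_zero,
      mul_zero, zero_mul, mul_one, one_mul, sub_zero]
    try simp only [← TensorProduct.smul_tmul', TensorProduct.zero_tmul, TensorProduct.tmul_zero,
      zero_smul, smul_zero, add_zero, zero_add, sub_zero]
    try module
  · refine TensorProduct.ext' fun p q => ?_
    obtain ⟨a, x⟩ := p; obtain ⟨b, y⟩ := q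
    simp only [LinearMap.coe_comp, LinearEquiv.coe_coe, Function.comp_apply,
      TensorProduct.map_tmul, LinearMap.id_coe, id_eq,
      TensorProduct.assoc_tmul, TensorProduct.assoc_symm_tmul,
      TensorProduct.lid_symm_apply, TensorProduct.rid_symm_apply,
      TensorProduct.lid_tmul, TensorProduct.rid_tmul,
      map_add, map_sub, TensorProduct.tmul_add, TensorProduct.add_tmul,
      TensorProduct.tmul_sub, TensorProduct.sub_tmul, hμ, hη, hΔ, hε, hh,
      TensorProduct.smul_tmul', TensorProduct.tmul_smul]
    try simp only [sq0_mk_decomp, map_add, map_smul, map_zero, map_sub, smul_zero, add_zero,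
      zero_add, one_smul, zero_smul, smul_add, smul_sub,
      TensorProduct.tmul_add, TensorProduct.add_tmul,
      TensorProduct.tmul_sub, TensorProduct.sub_tmul,
      TensorProduct.smul_tmul', TensorProduct.tmul_smul, smul_smul,
      TensorProduct.zero_tmul, TensorProduct.tmul_zero,
      mul_zero, zero_mul, mul_one, one_mul, sub_zero]
    try simp only [← TensorProduct.smul_tmul', TensorProduct.zero_tmul, TensorProduct.tmul_zero,
      zero_smul, smul_zero, add_zero, zero_add, sub_zero]
    try module
  · refine TensorProduct.ext' fun p q => ?_
    obtain ⟨a, x⟩ := p; obtain ⟨b, y⟩ := q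
    simp only [LinearMap.coe_comp, LinearEquiv.coe_coe, Function.comp_apply,
      TensorProduct.map_tmul, LinearMap.id_coe, id_eq,
      TensorProduct.assoc_tmul, TensorProduct.assoc_symm_tmul,
      TensorProduct.lid_symm_apply, TensorProduct.rid_symm_apply,
      TensorProduct.lid_tmul, TensorProduct.rid_tmul,
      map_add, map_sub, TensorProduct.tmul_add, TensorProduct.add_tmul,
      TensorProduct.tmul_sub, TensorProduct.sub_tmul, hμ, hη, hΔ, hε, hh,
      TensorProduct.smul_tmul', TensorProduct.tmul_smul]
    try simp only [sq0_mk_decomp, map_add, map_smul, map_zero, map_sub, smul_zero, add_zero,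
      zero_add, one_smul, zero_smul, smul_add, smul_sub,
      TensorProduct.tmul_add, TensorProduct.add_tmul,
      TensorProduct.tmul_sub, TensorProduct.sub_tmul,
      TensorProduct.smul_tmul', TensorProduct.tmul_smul, smul_smul,
      TensorProduct.zero_tmul, TensorProduct.tmul_zero,
      mul_zero, zero_mul, mul_one, one_mul, sub_zero]
    try simp only [← TensorProduct.smul_tmul', TensorProduct.zero_tmul, TensorProduct.tmul_zero,
      zero_smul, smul_zero, add_zero, zero_add, sub_zero]
    try module
  · refine TensorProduct.ext' fun p q => ?_
    obtain ⟨a, x⟩ := p; obtain ⟨b, y⟩ := q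
    simp only [LinearMap.coe_comp, LinearEquiv.coe_coe, Function.comp_apply,
      TensorProduct.map_tmul, LinearMap.id_coe, id_eq,
      TensorProduct.assoc_tmul, TensorProduct.assoc_symm_tmul,
      TensorProduct.lid_symm_apply, TensorProduct.rid_symm_apply,
      TensorProduct.lid_tmul, TensorProduct.rid_tmul,
      map_add, map_sub, TensorProduct.tmul_add, TensorProduct.add_tmul,
      TensorProduct.tmul_sub, TensorProduct.sub_tmul, hμ, hη, hΔ, hε, hh,
      TensorProduct.smul_tmul', TensorProduct.tmul_smul]
    try simp only [sq0_mk_decomp, map_add, map_smul, map_zero, map_sub, smul_zero, add_zero,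
      zero_add, one_smul, zero_smul, smul_add, smul_sub,
      TensorProduct.tmul_add, TensorProduct.add_tmul,
      TensorProduct.tmul_sub, TensorProduct.sub_tmul,
      TensorProduct.smul_tmul', TensorProduct.tmul_smul, smul_smul,
      TensorProduct.zero_tmul, TensorProduct.tmul_zero,
      mul_zero, zero_mul, mul_one, one_mul, sub_zero]
    try simp only [← TensorProduct.smul_tmul', TensorProduct.zero_tmul, TensorProduct.tmul_zero,
      zero_smul, smul_zero, add_zero, zero_add, sub_zero]
    try module
    abel
end
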